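/- arXiv:2605.02231 — 6 statements merged into one kernel-verified Lean document; each statement's English description precedes it below -/
import Mathlib

section
/- Let r ≥ 1 and define the r×r matrix S_r by (S_r)_{a,b} = (−1)^{a+b} · C(a+b−1, a−1) for 1 ≤ a,b ≤ r. Then det S_r = 1. -/
open Finset

lemma nat_key (a b : ℕ) :
    ∑ c ∈ Finset.range (b + 1), (a + 1).choose (c + 1) * b.choose c
      = (a + 1 + b).choose (b + 1) := by
  rw [Nat.add_choose_eq, Finset.Nat.sum_antidiagonal_eq_sum_range_succ_mk]
  conv_rhs => rw [Finset.sum_range_succ']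
  simp only [Nat.choose_zero_right, one_mul, Nat.choose_succ_self, mul_zero, add_zero,
    Nat.succ_sub_succ, Nat.sub_zero]
  exact Finset.sum_congr rfl fun c hc => by
    rw [Nat.choose_symm (by simp at hc; omega : c ≤ b)]

lemma nat_key' (r a b : ℕ) (hb : b < r) :
    ∑ c ∈ Finset.range r, (a + 1).choose (c + 1) * b.choose c
      = (a + b + 1).choose a := by
  have h1 : ∑ c ∈ Finset.range r, (a + 1).choose (c + 1) * b.choose c
      = ∑ c ∈ Finset.range (b + 1), (a + 1).choose (c + 1) * b.choose c := by
    refine (Finset.sum_subset (Finset.range_subset_range.2 (by omega : b + 1 ≤ r))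
      (fun c _ hc => ?_)).symm
    rw [Nat.choose_eq_zero_of_lt (by simp at hc; omega : b < c), mul_zero]
  rw [h1, nat_key, show a + 1 + b = a + b + 1 by ring]
  have := Nat.choose_symm (n := a + b + 1) (k := b + 1) (by omega)
  simpa [show a + b + 1 - (b + 1) = a by omega] using this.symm

/-- The matrix `S_r` with `(S_r)_{a,b} = (-1)^(a+b) C(a+b-1, a-1)` (1-based indices)
has determinant 1. Here index `a : Fin r` represents the 1-based index `a+1`. -/
theorem det_S_eq_one (r : ℕ) (hr : 1 ≤ r) :
    Matrix.det (Matrix.of fun a b : Fin r =>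
      ((-1 : ℝ)) ^ ((a : ℕ) + (b : ℕ)) * (Nat.choose ((a : ℕ) + (b : ℕ) + 1) (a : ℕ)))
      = 1 := by
  set A : Matrix (Fin r) (Fin r) ℝ := Matrix.of fun a c : Fin r =>
    ((-1 : ℝ)) ^ ((a : ℕ) + (c : ℕ)) * (((a : ℕ) + 1).choose ((c : ℕ) + 1)) with hA
  set B : Matrix (Fin r) (Fin r) ℝ := Matrix.of fun c b : Fin r =>
    ((-1 : ℝ)) ^ ((c : ℕ) + (b : ℕ)) * ((b : ℕ).choose (c : ℕ)) with hB
  have hAB : (Matrix.of fun a b : Fin r =>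
      ((-1 : ℝ)) ^ ((a : ℕ) + (b : ℕ)) * (Nat.choose ((a : ℕ) + (b : ℕ) + 1) (a : ℕ)))
      = A * B := by
    ext a b
    simp only [Matrix.mul_apply, hA, hB, Matrix.of_apply]
    have step : ∀ c : Fin r,
        ((-1 : ℝ)) ^ ((a : ℕ) + (c : ℕ)) * (((a : ℕ) + 1).choose ((c : ℕ) + 1)) *
          (((-1 : ℝ)) ^ ((c : ℕ) + (b : ℕ)) * ((b : ℕ).choose (c : ℕ)))
        = ((-1 : ℝ)) ^ ((a : ℕ) + (b : ℕ)) *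
            ((((a : ℕ) + 1).choose ((c : ℕ) + 1) * (b : ℕ).choose (c : ℕ) : ℕ) : ℝ) := by
      intro c
      have hs : ((-1 : ℝ)) ^ ((a : ℕ) + (c : ℕ)) * ((-1 : ℝ)) ^ ((c : ℕ) + (b : ℕ))
          = ((-1 : ℝ)) ^ ((a : ℕ) + (b : ℕ)) := by
        rw [← pow_add, show (a : ℕ) + c + ((c : ℕ) + b) = (a : ℕ) + b + 2 * c by ring,
          pow_add, pow_mul]
        norm_num
      push_cast
      rw [← hs]; ring
    rw [Finset.sum_congr rfl fun c _ => step c, ← Finset.mul_sum, ← Nat.cast_sum]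
    congr 1
    rw [Fin.sum_univ_eq_sum_range (fun c => ((a : ℕ) + 1).choose (c + 1) * (b : ℕ).choose c)]
    exact_mod_cast congrArg (Nat.cast : ℕ → ℝ) (nat_key' r a b b.isLt).symm
  rw [hAB, Matrix.det_mul]
  have hdA : A.det = 1 := by
    rw [Matrix.det_of_lowerTriangular A (fun i j hij => by
      simp only [hA, Matrix.of_apply]
      rw [Nat.choose_eq_zero_of_lt (by exact_mod_cast Nat.succ_lt_succ hij : (i : ℕ) + 1 < (j : ℕ) + 1)]
      simp)]
    refine Finset.prod_eq_one fun i _ => ?_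
    simp only [hA, Matrix.of_apply, Nat.choose_self, Nat.cast_one, mul_one]
    rw [← two_mul, pow_mul]; norm_num
  have hdB : B.det = 1 := by
    rw [Matrix.det_of_upperTriangular (fun i j hij => by
      simp only [hB, Matrix.of_apply]
      rw [Nat.choose_eq_zero_of_lt (by exact_mod_cast hij : (j : ℕ) < (i : ℕ))]
      simp)]
    refine Finset.prod_eq_one fun i _ => ?_
    simp only [hB, Matrix.of_apply, Nat.choose_self, Nat.cast_one, mul_one]
    rw [← two_mul, pow_mul]; norm_num
  rw [hdA, hdB, mul_one]
end

section
/- Let r ≥ 1 and define the r×r matrix S_r by (S_r)_{a,b} = (−1)^{a+b} · C(a+b−1, a−1). Then the vector c_r with entries (c_r)_b = C(r−1, b−1) for b = 1,…,r satisfies S_r · c_r = e_r, where e_r is the r-th standard basis vector. -/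
open Finset
lemma diff_sum (n : ℕ) (g : ℕ → ℝ) :
    ∑ b ∈ range (n+2), (-1:ℝ)^b * ((n+1).choose b) * g b
      = ∑ b ∈ range (n+1), (-1:ℝ)^b * (n.choose b) * (g b - g (b+1)) := by
  have hC : ∑ b ∈ range (n+1), (-1:ℝ)^b * (n.choose (b+1)) * g (b+1)
      = g 0 - ∑ b ∈ range (n+1), (-1:ℝ)^b * (n.choose b) * g b := by
    rw [Finset.sum_range_succ _ n,
      Finset.sum_range_succ' (fun b => (-1:ℝ)^b * (n.choose b) * g b) n]
    simp [Nat.choose_succ_self, pow_succ]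
  have step : ∀ b, (-1:ℝ)^(b+1) * (((n+1).choose (b+1) : ℕ) : ℝ) * g (b+1)
      = -((-1:ℝ)^b * (n.choose b) * g (b+1)) - (-1:ℝ)^b * (n.choose (b+1)) * g (b+1) := by
    intro b
    push_cast [Nat.choose_succ_succ]
    ring
  rw [Finset.sum_range_succ' _ (n+1)]
  simp only [step, Finset.sum_sub_distrib, Finset.sum_neg_distrib, hC, mul_sub]
  simp only [Nat.choose_zero_right, Nat.cast_one]
  ring

lemma key (a : ℕ) : ∀ n s : ℕ,
    ∑ b ∈ range (n+1), (-1:ℝ)^b * (n.choose b) * ((a+s+b).choose a)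
      = if n ≤ a then (-1:ℝ)^n * ((a+s).choose (a-n)) else 0 := by
  intro n
  induction n with
  | zero => intro s; simp
  | succ n ih =>
    intro s
    rw [show n+1+1 = n+2 from rfl, diff_sum n (fun b => (((a+s+b).choose a : ℕ) : ℝ))]
    have expand : ∑ b ∈ range (n+1), (-1:ℝ)^b * (n.choose b) *
        (((a+s+b).choose a : ℝ) - ((a+s+(b+1)).choose a))
        = (∑ b ∈ range (n+1), (-1:ℝ)^b * (n.choose b) * ((a+s+b).choose a))
          - ∑ b ∈ range (n+1), (-1:ℝ)^b * (n.choose b) * ((a+(s+1)+b).choose a) := by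
      rw [← Finset.sum_sub_distrib]
      apply Finset.sum_congr rfl
      intro b _
      have : a + (s+1) + b = a + s + (b+1) := by ring
      rw [this]
      ring
    rw [expand, ih s, ih (s+1)]
    rcases lt_trichotomy a n with h | h | h
    · rw [if_neg (by omega), if_neg (by omega), if_neg (by omega)]; ring
    · subst h
      rw [if_pos le_rfl, if_pos le_rfl, if_neg (by omega)]
      simp [Nat.sub_self]
    · -- n + 1 ≤ a
      rw [if_pos h.le, if_pos h.le, if_pos (show n+1 ≤ a from h)]
      have h1 : a - n = (a - (n+1)) + 1 := by omega
      have h2 : (a + (s + 1)).choose (a - n)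
          = (a + s).choose (a - (n+1)) + (a + s).choose (a - n) := by
        rw [show a + (s+1) = (a+s) + 1 from rfl, h1, Nat.choose_succ_succ]
      rw [h2]
      push_cast
      ring

/-- The vector `c_r` with `(c_r)_b = C(r-1, b-1)` satisfies `S_r c_r = e_r`,
where `(S_r)_{a,b} = (-1)^(a+b) C(a+b-1,a-1)` (1-based) and `e_r` is the last
standard basis vector. Index `a : Fin r` represents 1-based index `a+1`. -/
theorem S_mulVec_c_eq_e (r : ℕ) (hr : 1 ≤ r) :
    (Matrix.of fun a b : Fin r =>
        ((-1 : ℝ)) ^ ((a : ℕ) + (b : ℕ)) *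
          (Nat.choose ((a : ℕ) + (b : ℕ) + 1) (a : ℕ))).mulVec
      (fun b : Fin r => (Nat.choose (r - 1) (b : ℕ) : ℝ))
      = fun i : Fin r => if (i : ℕ) = r - 1 then 1 else 0 := by
  funext i
  obtain ⟨n, rfl⟩ : ∃ n, r = n + 1 := ⟨r - 1, by omega⟩
  simp only [Matrix.mulVec, dotProduct, Matrix.of_apply, Nat.add_sub_cancel]
  rw [Fin.sum_univ_eq_sum_range
    (fun b => (-1:ℝ) ^ ((i:ℕ) + b) * ((((i:ℕ) + b + 1).choose (i:ℕ) : ℕ)) * ((n.choose b : ℕ)))]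
  have rearr : ∀ b, (-1:ℝ) ^ ((i:ℕ) + b) * ((((i:ℕ) + b + 1).choose (i:ℕ) : ℕ) : ℝ) * ((n.choose b : ℕ) : ℝ)
      = (-1:ℝ)^(i:ℕ) * ((-1:ℝ)^b * (n.choose b) * ((((i:ℕ) + 1 + b).choose (i:ℕ) : ℕ) : ℝ)) := by
    intro b
    rw [show (i:ℕ) + 1 + b = (i:ℕ) + b + 1 by ring, pow_add]
    ring
  simp only [rearr, ← Finset.mul_sum]
  rw [key (i:ℕ) n 1]
  have hi : (i:ℕ) ≤ n := by omega
  rcases eq_or_lt_of_le hi with h | h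
  · rw [if_pos (by omega), if_pos h, h, Nat.sub_self, Nat.choose_zero_right]
    rw [Nat.cast_one, mul_one, ← pow_add, ← two_mul, pow_mul]
    norm_num
  · rw [if_neg (by omega), if_neg (by omega)]
    ring
end

section
/- Let r ≥ 1. Define the r×r matrix P_r by (P_r)_{a,b} = (−1)^{a+b} · C(a+b, a) and the (r+1)×r matrix R_r by (R_r)_{a,b} = (−1)^{b−1} · C(b, a−1). Then P_r = R_r^T · R_r; in particular, P_r is symmetric positive definite. -/
open Finset

lemma vdm (m n : ℕ) : ∑ a ∈ range (m + 1), m.choose a * n.choose a = (m + n).choose m := by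
  rw [Nat.add_choose_eq, Finset.Nat.sum_antidiagonal_eq_sum_range_succ_mk,
    ← Finset.sum_range_reflect]
  refine Finset.sum_congr rfl fun k hk => ?_
  rw [mem_range] at hk
  simp only [Nat.add_sub_cancel]
  rw [Nat.choose_symm (by omega : k ≤ m)]

lemma vdm' (m n N : ℕ) (hm : m ≤ N) :
    ∑ a ∈ range (N + 1), m.choose a * n.choose a = (m + n).choose m := by
  rw [← vdm m n]
  symm
  apply Finset.sum_subset (by intro x; simp; omega)
  intro x _ hx
  rw [mem_range] at hx
  rw [Nat.choose_eq_zero_of_lt (by omega), zero_mul]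

lemma Rinj (r : ℕ) (x : Fin r → ℝ)
    (hx : (Matrix.of fun (a : Fin (r + 1)) (b : Fin r) =>
          ((-1 : ℝ)) ^ (b : ℕ) * (Nat.choose ((b : ℕ) + 1) (a : ℕ))).mulVec x = 0) :
    x = 0 := by
  have key : ∀ m : ℕ, ∀ b : Fin r, r - (b : ℕ) ≤ m → x b = 0 := by
    intro m
    induction m with
    | zero => intro b hb; exact absurd hb (by omega)
    | succ m ih =>
      intro b hb
      have hc : ∀ c : Fin r, (b : ℕ) < (c : ℕ) → x c = 0 := fun c hc =>
        ih c (by omega)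
      have hrow := congrFun hx ⟨(b : ℕ) + 1, by omega⟩
      simp only [Matrix.mulVec, Matrix.of_apply, Pi.zero_apply, dotProduct] at hrow
      rw [Finset.sum_eq_single b] at hrow
      · simp only [Nat.choose_self] at hrow
        have : ((-1 : ℝ)) ^ (b : ℕ) ≠ 0 := by positivity
        field_simp at hrow
        simpa using hrow
      · intro c _ hcb
        rcases lt_or_gt_of_ne (fun h : (c : ℕ) = (b : ℕ) => hcb (Fin.ext h)) with h | h
        · rw [Nat.choose_eq_zero_of_lt (by omega)]; simp
        · rw [hc c h, mul_zero]
      · intro h; exact absurd (Finset.mem_univ b) h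
  funext b
  exact key (r - b) b le_rfl

/-- `P_r = R_rᵀ R_r` and `P_r` is symmetric positive definite, where (1-based)
`(P_r)_{a,b} = (-1)^(a+b) C(a+b, a)` is `r × r` and
`(R_r)_{a,b} = (-1)^(b-1) C(b, a-1)` is `(r+1) × r`.
Index `a : Fin r` represents 1-based index `a+1`. -/
theorem P_eq_Rt_mul_R_and_posDef (r : ℕ) (hr : 1 ≤ r) :
    (Matrix.of fun a b : Fin r =>
        ((-1 : ℝ)) ^ ((a : ℕ) + (b : ℕ)) *
          (Nat.choose ((a : ℕ) + (b : ℕ) + 2) ((a : ℕ) + 1)))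
      = (Matrix.transpose (Matrix.of fun (a : Fin (r + 1)) (b : Fin r) =>
          ((-1 : ℝ)) ^ (b : ℕ) * (Nat.choose ((b : ℕ) + 1) (a : ℕ)))) *
        (Matrix.of fun (a : Fin (r + 1)) (b : Fin r) =>
          ((-1 : ℝ)) ^ (b : ℕ) * (Nat.choose ((b : ℕ) + 1) (a : ℕ)))
    ∧ (Matrix.of fun a b : Fin r =>
        ((-1 : ℝ)) ^ ((a : ℕ) + (b : ℕ)) *
          (Nat.choose ((a : ℕ) + (b : ℕ) + 2) ((a : ℕ) + 1))).PosDef := by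
  set R := (Matrix.of fun (a : Fin (r + 1)) (b : Fin r) =>
          ((-1 : ℝ)) ^ (b : ℕ) * (Nat.choose ((b : ℕ) + 1) (a : ℕ))) with hR
  have heq : (Matrix.of fun a b : Fin r =>
        ((-1 : ℝ)) ^ ((a : ℕ) + (b : ℕ)) *
          (Nat.choose ((a : ℕ) + (b : ℕ) + 2) ((a : ℕ) + 1))) = R.transpose * R := by
    ext i j
    simp only [Matrix.mul_apply, Matrix.transpose_apply, Matrix.of_apply, hR]
    have hs : ∑ a : Fin (r + 1), ((((i : ℕ) + 1).choose a : ℝ) * (((j : ℕ) + 1).choose a : ℝ))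
        = (((i : ℕ) + (j : ℕ) + 2).choose ((i : ℕ) + 1) : ℝ) := by
      rw [Fin.sum_univ_eq_sum_range
        (fun a => ((((i : ℕ) + 1).choose a : ℝ) * (((j : ℕ) + 1).choose a : ℝ)))]
      have h2 : ((i : ℕ) + 1) + ((j : ℕ) + 1) = (i : ℕ) + (j : ℕ) + 2 := by omega
      rw [show (((i : ℕ) + (j : ℕ) + 2).choose ((i : ℕ) + 1) : ℝ)
          = ((∑ a ∈ range (r + 1), ((i : ℕ) + 1).choose a * ((j : ℕ) + 1).choose a : ℕ) : ℝ) by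
        rw [vdm' ((i : ℕ) + 1) ((j : ℕ) + 1) r (by omega), h2]]
      push_cast
      rfl
    have h3 : ∀ a : Fin (r + 1),
        ((-1 : ℝ)) ^ (i : ℕ) * (((i : ℕ) + 1).choose a) *
          (((-1 : ℝ)) ^ (j : ℕ) * (((j : ℕ) + 1).choose a))
        = ((-1 : ℝ)) ^ ((i : ℕ) + (j : ℕ)) *
            ((((i : ℕ) + 1).choose a : ℝ) * (((j : ℕ) + 1).choose a : ℝ)) := by
      intro a; rw [pow_add]; ring
    rw [Finset.sum_congr rfl fun a _ => h3 a, ← Finset.mul_sum, hs]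
  refine ⟨heq, ?_⟩
  rw [heq]
  have hRt : R.transpose = R.conjTranspose := by
    ext a b; simp [Matrix.conjTranspose_apply]
  rw [Matrix.posDef_iff_dotProduct_mulVec]
  constructor
  · rw [hRt]; exact Matrix.isHermitian_conjTranspose_mul_self R
  · intro x hx
    have h1 : dotProduct (star x) ((R.transpose * R).mulVec x) = dotProduct (R.mulVec x) (R.mulVec x) := by
      rw [← Matrix.mulVec_mulVec, Matrix.dotProduct_mulVec, hRt,
        Matrix.vecMul_conjTranspose, star_star]
      simp [dotProduct, mul_comm]
    rw [h1]
    have hRx : R.mulVec x ≠ 0 := fun h => hx (Rinj r x h)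
    simp only [dotProduct]
    obtain ⟨i, hi⟩ := Function.ne_iff.mp hRx
    exact Finset.sum_pos' (fun i _ => mul_self_nonneg (R.mulVec x i))
      ⟨i, Finset.mem_univ i, mul_self_pos.mpr hi⟩
end

section
/- Fix integers N > N' ≥ 1 and set M = N − N'. Define Q(n) = (N'·(M+1))/(N·(n+1)) · C(M−1, n−1) for n = 1,…,M. Then for each m with 0 ≤ m ≤ M−1, the sum over n from 1 to M of (−1)^n · C(m+n−1, m) · Q(n) equals: −N'/(N·M) if m = 0; N'/(N·M) if m = 1; and 0 if 2 ≤ m ≤ M−1. -/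
open Finset

lemma altQ (n : ℕ) : ∑ i ∈ range (n+1), (-1:ℚ)^i * (n.choose i) = if n = 0 then 1 else 0 := by
  have := Int.alternating_sum_range_choose (n := n)
  have h := congrArg (fun z : ℤ => (z : ℚ)) this
  push_cast at h
  convert h using 2 <;> simp

lemma L1 (n r : ℕ) (h : r < n) :
    ∑ j ∈ range (n+1), (-1:ℚ)^j * (n.choose j) * (j.choose r) = 0 := by
  have hr1 : r ≤ n + 1 := by omega
  rw [range_eq_Ico, ← Finset.sum_Ico_consecutive _ (Nat.zero_le r) hr1]
  have h0 : ∑ j ∈ Ico 0 r, (-1:ℚ)^j * (n.choose j) * (j.choose r) = 0 := by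
    apply Finset.sum_eq_zero
    intro j hj
    rw [mem_Ico] at hj
    rw [Nat.choose_eq_zero_of_lt hj.2]
    simp
  rw [h0, zero_add, Finset.sum_Ico_eq_sum_range]
  have hsub : n + 1 - r = (n - r) + 1 := by omega
  rw [hsub]
  have hterm : ∀ i ∈ range ((n-r)+1), (-1:ℚ)^(r+i) * (n.choose (r+i)) * ((r+i).choose r)
      = ((-1:ℚ)^r * (n.choose r)) * ((-1:ℚ)^i * ((n-r).choose i)) := by
    intro i hi
    rw [mem_range] at hi
    have hle : r + i ≤ n := by omega
    have := Nat.choose_mul (n := n) (k := r+i) (s := r) (Nat.le_add_right r i)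
    rw [Nat.add_sub_cancel_left] at this
    have hq : ((n.choose (r+i) : ℚ)) * ((r+i).choose r) = (n.choose r : ℚ) * ((n-r).choose i) := by
      exact_mod_cast congrArg (fun x : ℕ => (x:ℚ)) this
    rw [pow_add]
    calc (-1:ℚ)^r * (-1)^i * ↑(n.choose (r + i)) * ↑((r + i).choose r)
        = ((-1:ℚ)^r * (-1)^i) * (↑(n.choose (r + i)) * ↑((r + i).choose r)) := by ring
      _ = ((-1:ℚ)^r * (-1)^i) * (↑(n.choose r) * ↑((n - r).choose i)) := by rw [hq]
      _ = (-1:ℚ) ^ r * ↑(n.choose r) * ((-1) ^ i * ↑((n - r).choose i)) := by ring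
  rw [Finset.sum_congr rfl hterm, ← Finset.mul_sum, altQ]
  have : n - r ≠ 0 := by omega
  simp [this]

-- (k+1)(k+2) C(M+1,k+2) = M(M+1) C(M-1,k)
lemma keyNat (M k : ℕ) (hM : 1 ≤ M) :
    (k+1) * ((k+2) * (M+1).choose (k+2)) = M * ((M+1) * (M-1).choose k) := by
  have h1 : (M+1) * (M.choose (k+1)) = (M+1).choose (k+2) * (k+2) := by
    exact_mod_cast Nat.add_one_mul_choose_eq M (k+1)
  have h2 : ((M-1)+1) * ((M-1).choose k) = ((M-1)+1).choose (k+1) * (k+1) := by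
    exact_mod_cast Nat.add_one_mul_choose_eq (M-1) k
  have hM1 : M - 1 + 1 = M := by omega
  rw [hM1] at h2
  calc (k+1) * ((k+2) * (M+1).choose (k+2)) = ((M+1).choose (k+2) * (k+2)) * (k+1) := by ring
    _ = ((M+1) * M.choose (k+1)) * (k+1) := by rw [h1]
    _ = (M+1) * (M.choose (k+1) * (k+1)) := by ring
    _ = (M+1) * (M * (M-1).choose k) := by rw [h2]
    _ = M * ((M+1) * (M-1).choose k) := by ring

-- B(r) = 0 for 2 ≤ r ≤ M
lemma B0 (M r : ℕ) (h2 : 2 ≤ r) (hrM : r ≤ M) :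
    ∑ k ∈ range M, (-1:ℚ)^k * ((k+2).choose r) * ((M+1).choose (k+2)) = 0 := by
  have hfull := L1 (M+1) r (by omega)
  rw [Finset.sum_range_succ' _ (M+1), Finset.sum_range_succ' _ M] at hfull
  have hz0 : (Nat.choose 0 r : ℚ) = 0 := by
    rw [Nat.choose_eq_zero_of_lt (by omega)]; simp
  have hz1 : (Nat.choose 1 r : ℚ) = 0 := by
    rw [Nat.choose_eq_zero_of_lt (by omega)]; simp
  simp only [hz0, hz1, mul_zero, zero_mul, add_zero] at hfull
  calc ∑ k ∈ range M, (-1:ℚ)^k * ((k+2).choose r) * ((M+1).choose (k+2))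
      = ∑ k ∈ range M, (-1:ℚ)^(k+1+1) * ((M+1).choose (k+1+1)) * ((k+1+1).choose r) := by
        apply Finset.sum_congr rfl; intro k _; ring_nf
    _ = 0 := hfull

lemma S1eq (M : ℕ) (hM : 1 ≤ M) : ∑ k ∈ range M, (-1:ℚ)^k * (M.choose (k+1)) = 1 := by
  have h := altQ M
  rw [Finset.sum_range_succ' _ M, if_neg (by omega)] at h
  have : ∑ k ∈ range M, (-1:ℚ)^(k+1) * (M.choose (k+1))
      = - ∑ k ∈ range M, (-1:ℚ)^k * (M.choose (k+1)) := by
    rw [← Finset.sum_neg_distrib]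
    apply Finset.sum_congr rfl; intro k _; ring
  rw [this] at h
  simp only [pow_zero, Nat.choose_zero_right, Nat.cast_one, one_mul] at h
  linarith

lemma S2eq (M : ℕ) (hM : 1 ≤ M) :
    ∑ k ∈ range M, (-1:ℚ)^k * ((M+1).choose (k+2)) = M := by
  have h := altQ (M+1)
  rw [Finset.sum_range_succ' _ (M+1), Finset.sum_range_succ' _ M, if_neg (by omega)] at h
  have : ∑ k ∈ range M, (-1:ℚ)^(k+1+1) * ((M+1).choose (k+1+1))
      = ∑ k ∈ range M, (-1:ℚ)^k * ((M+1).choose (k+2)) := by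
    apply Finset.sum_congr rfl; intro k _; ring_nf
  rw [this] at h
  simp only [zero_add, pow_zero, pow_one, Nat.choose_zero_right, Nat.choose_one_right,
    Nat.cast_one, one_mul] at h
  push_cast at h
  linarith

-- A(0) = 1
lemma A0eq (M : ℕ) (hM : 1 ≤ M) :
    ∑ k ∈ range M, (-1:ℚ)^k * (k+1) * ((M+1).choose (k+2)) = 1 := by
  have hterm : ∀ k ∈ range M, (-1:ℚ)^k * (k+1) * ((M+1).choose (k+2))
      = (M+1) * ((-1:ℚ)^k * (M.choose (k+1))) - (-1:ℚ)^k * ((M+1).choose (k+2)) := by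
    intro k _
    have h1 : ((M:ℚ)+1) * (M.choose (k+1)) = ((M+1).choose (k+2)) * (k+2) := by
      exact_mod_cast congrArg (fun x : ℕ => (x:ℚ)) (Nat.add_one_mul_choose_eq M (k+1))
    linear_combination (-(-1:ℚ)^k) * h1
  rw [Finset.sum_congr rfl hterm, Finset.sum_sub_distrib, ← Finset.mul_sum, S1eq M hM, S2eq M hM]
  ring

-- A(1) = -1
lemma A1eq (M : ℕ) (hM : 2 ≤ M) :
    ∑ k ∈ range M, (-1:ℚ)^k * (k+1) * ((1+k).choose 1) * ((M+1).choose (k+2)) = -1 := by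
  have hterm : ∀ k ∈ range M, (-1:ℚ)^k * (k+1) * ((1+k).choose 1) * ((M+1).choose (k+2))
      = (M:ℚ)*(M+1) * ((-1:ℚ)^k * ((M-1).choose k)) - (-1:ℚ)^k * (k+1) * ((M+1).choose (k+2)) := by
    intro k _
    have h1 : ((k:ℚ)+1) * (((k:ℚ)+2) * ((M+1).choose (k+2))) = (M:ℚ) * (((M:ℚ)+1) * ((M-1).choose k)) := by
      have := congrArg (fun x : ℕ => (x:ℚ)) (keyNat M k (by omega))
      push_cast at this
      convert this using 2 <;> push_cast <;> ring
    rw [Nat.choose_one_right]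
    push_cast
    linear_combination ((-1:ℚ)^k) * h1
  rw [Finset.sum_congr rfl hterm, Finset.sum_sub_distrib, ← Finset.mul_sum]
  have h3 : ∑ k ∈ range M, (-1:ℚ)^k * ((M-1).choose k) = 0 := by
    have := altQ (M-1)
    have hM1 : M - 1 + 1 = M := by omega
    rw [hM1, if_neg (by omega)] at this
    exact this
  rw [h3, A0eq M (by omega)]
  ring

lemma Dj (M j : ℕ) (h2 : 2 ≤ j) (hj : j + 1 ≤ M) :
    ∑ k ∈ range M, (-1:ℚ)^k * (k+1) * ((k+2).choose j) * ((M+1).choose (k+2)) = 0 := by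
  have hterm : ∀ k ∈ range M, (-1:ℚ)^k * (k+1) * ((k+2).choose j) * ((M+1).choose (k+2))
      = ((j:ℚ)+1) * ((-1:ℚ)^k * ((k+2).choose (j+1)) * ((M+1).choose (k+2)))
        + ((j:ℚ)-1) * ((-1:ℚ)^k * ((k+2).choose j) * ((M+1).choose (k+2))) := by
    intro k _
    rcases le_or_gt j (k+2) with hle | hlt
    · have h1 : ((k+2).choose (j+1) : ℚ) * ((j:ℚ)+1) = ((k+2).choose j : ℚ) * (((k:ℚ)+2) - j) := by
        have := congrArg (fun x : ℕ => (x:ℚ)) (Nat.choose_succ_right_eq (k+2) j)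
        push_cast [Nat.cast_sub hle] at this
        convert this using 2 <;> push_cast <;> ring
      linear_combination (-(-1:ℚ)^k * ((M+1).choose (k+2))) * h1
    · rw [Nat.choose_eq_zero_of_lt hlt, Nat.choose_eq_zero_of_lt (show k+2 < j+1 by omega)]
      simp
  rw [Finset.sum_congr rfl hterm, Finset.sum_add_distrib, ← Finset.mul_sum, ← Finset.mul_sum,
    B0 M (j+1) (by omega) (by omega), B0 M j h2 (by omega)]
  ring

lemma Ameq (M m : ℕ) (hm2 : 2 ≤ m) (hm : m + 1 ≤ M) :
    ∑ k ∈ range M, (-1:ℚ)^k * (k+1) * ((m+k).choose m) * ((M+1).choose (k+2)) = 0 := by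
  have hvan : ∀ k : ℕ, ((m+k).choose m : ℚ)
      = ∑ ij ∈ Finset.HasAntidiagonal.antidiagonal m, ((m-2).choose ij.1 : ℚ) * ((k+2).choose ij.2 : ℚ) := by
    intro k
    have hsplit : m + k = (m-2) + (k+2) := by omega
    rw [hsplit, Nat.add_choose_eq]
    push_cast
    rfl
  have hterm : ∀ k ∈ range M, (-1:ℚ)^k * (k+1) * ((m+k).choose m) * ((M+1).choose (k+2))
      = ∑ ij ∈ Finset.HasAntidiagonal.antidiagonal m, ((m-2).choose ij.1 : ℚ) *
          ((-1:ℚ)^k * (k+1) * ((k+2).choose ij.2) * ((M+1).choose (k+2))) := by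
    intro k _
    rw [hvan k, Finset.mul_sum, Finset.sum_mul]
    apply Finset.sum_congr rfl
    intro ij _
    ring
  rw [Finset.sum_congr rfl hterm, Finset.sum_comm]
  apply Finset.sum_eq_zero
  intro ij hij
  rw [Finset.HasAntidiagonal.mem_antidiagonal] at hij
  rcases le_or_gt ij.2 1 with hj | hj
  · have : m - 2 < ij.1 := by omega
    rw [Nat.choose_eq_zero_of_lt this]
    simp
  · rw [← Finset.mul_sum, Dj M ij.2 (by omega) (by omega)]
    ring



/-- With `M = N - N'` and `Q(n) = N'(M+1)/(N(n+1)) · C(M-1, n-1)`, for each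
`0 ≤ m ≤ M-1` the sum `∑_{n=1}^{M} (-1)^n C(m+n-1, m) Q(n)` equals
`-N'/(N·M)` if `m = 0`, `N'/(N·M)` if `m = 1`, and `0` if `2 ≤ m ≤ M-1`. -/
theorem glued_Q_alternating_sum (N N' : ℕ) (h1 : 1 ≤ N') (h2 : N' < N)
    (m : ℕ) (hm : m ≤ N - N' - 1) :
    ∑ n ∈ Finset.Icc 1 (N - N'),
        ((-1 : ℚ)) ^ n * (Nat.choose (m + n - 1) m) *
          (((N' : ℚ) * ((N - N' : ℕ) + 1)) / ((N : ℚ) * (n + 1)) *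
            (Nat.choose (N - N' - 1) (n - 1)))
      = if m = 0 then -(N' : ℚ) / ((N : ℚ) * (N - N' : ℕ))
        else if m = 1 then (N' : ℚ) / ((N : ℚ) * (N - N' : ℕ))
        else 0 := by
  set M := N - N' with hMdef
  have hM : 1 ≤ M := by omega
  have hN0 : (N:ℚ) ≠ 0 := Nat.cast_ne_zero.2 (by omega)
  have hMq0 : (M:ℚ) ≠ 0 := by
    simp only [ne_eq, Nat.cast_eq_zero]; omega
  have hIcc : Finset.Icc 1 M = Finset.Ico 1 (M+1) := by
    rw [Finset.Ico_add_one_right_eq_Icc]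
  rw [hIcc, Finset.sum_Ico_eq_sum_range]
  have hMM : M + 1 - 1 = M := by omega
  rw [hMM]
  have hterm : ∀ k ∈ range M,
      ((-1 : ℚ)) ^ (1+k) * (Nat.choose (m + (1+k) - 1) m) *
          (((N' : ℚ) * ((M:ℚ) + 1)) / ((N : ℚ) * ((1+k:ℕ) + 1)) *
            (Nat.choose (M - 1) ((1+k) - 1)))
      = (-((N':ℚ)/((N:ℚ)*(M:ℚ)))) *
          ((-1:ℚ)^k * ((k:ℚ)+1) * ((m+k).choose m) * ((M+1).choose (k+2))) := by
    intro k _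
    have e1 : m + (1+k) - 1 = m + k := by omega
    have e2 : (1+k) - 1 = k := by omega
    rw [e1, e2]
    have hkey : ((k:ℚ)+1) * (((k:ℚ)+2) * ((M+1).choose (k+2))) = (M:ℚ) * (((M:ℚ)+1) * ((M-1).choose k)) := by
      have := congrArg (fun x : ℕ => (x:ℚ)) (keyNat M k hM)
      push_cast at this
      convert this using 2 <;> push_cast <;> ring
    have hk2 : ((N:ℚ) * ((1+k:ℕ) + 1)) ≠ 0 := by
      push_cast
      positivity
    have hdiv : ((N':ℚ) * ((M:ℚ) + 1)) / ((N : ℚ) * ((1+k:ℕ) + 1)) * (((M-1).choose k : ℕ):ℚ)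
        = (N':ℚ)/((N:ℚ)*(M:ℚ)) * (((k:ℚ)+1) * ((M+1).choose (k+2))) := by
      rw [div_mul_eq_mul_div, div_mul_eq_mul_div, div_eq_div_iff hk2 (by positivity)]
      push_cast
      linear_combination (-(N':ℚ)*(N:ℚ)) * hkey
    rw [pow_add, pow_one, hdiv]
    ring
  rw [Finset.sum_congr rfl hterm, ← Finset.mul_sum]
  rcases Nat.eq_zero_or_pos m with hm0 | hmpos
  · subst hm0
    rw [if_pos rfl]
    have : ∑ k ∈ range M, (-1:ℚ)^k * ((k:ℚ)+1) * (((0+k).choose 0 : ℕ):ℚ) * ((M+1).choose (k+2))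
        = ∑ k ∈ range M, (-1:ℚ)^k * ((k:ℚ)+1) * ((M+1).choose (k+2)) := by
      apply Finset.sum_congr rfl; intro k _
      rw [Nat.choose_zero_right]
      push_cast; ring
    rw [this, A0eq M hM]
    field_simp
  rcases eq_or_lt_of_le (Nat.succ_le_of_lt hmpos) with hm1 | hm2
  · have hm1' : m = 1 := hm1.symm
    subst hm1'
    rw [if_neg (by omega), if_pos rfl]
    have hM2 : 2 ≤ M := by omega
    rw [A1eq M hM2]
    field_simp
  · rw [if_neg (by omega), if_neg (by omega)]
    rw [Ameq M m (by omega) (by omega)]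
    ring
end

section
/- Let k : {1,…,N−1} → {2,…,N} define a non-crossing arc diagram (j < k(j) for all j, and no j₁ < j₂ < k(j₁) < k(j₂)). For v ∈ {1,…,N−1}, define C(j) as the increasing orbit {j, k(j), k(k(j)), …, N} and the descendant set I(v) = { j ∈ {1,…,N−1} : v ∈ C(j) }. Then I(v) is an interval: I(v) = {ℓ(v), ℓ(v)+1, …, v}, where ℓ(v) = min I(v). -/
/-- For a non-crossing arc diagram `k` on `{1,…,N}` (with `N` a fixed point of
`k`, so that the increasing orbit `C(j) = {j, k(j), k(k(j)), …, N}` is given by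
iterating `k`), the descendant set
`I(v) = { j ∈ {1,…,N-1} : v ∈ C(j) }` of any node `v ∈ {1,…,N-1}` is the
interval `{ℓ(v), …, v}` where `ℓ(v) = min I(v)`. -/
theorem descendant_set_is_interval
    (N : ℕ) (hN : 2 ≤ N) (k : ℕ → ℕ)
    (harc : ∀ j, 1 ≤ j → j ≤ N - 1 → j < k j ∧ k j ≤ N)
    (hfix : k N = N)
    (hnc : ∀ j₁ j₂, 1 ≤ j₁ → j₂ ≤ N - 1 →
      ¬(j₁ < j₂ ∧ j₂ < k j₁ ∧ k j₁ < k j₂))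
    (v : ℕ) (hv1 : 1 ≤ v) (hv2 : v ≤ N - 1) :
    {j : ℕ | 1 ≤ j ∧ j ≤ N - 1 ∧ ∃ m : ℕ, k^[m] j = v}
      = Set.Icc (sInf {j : ℕ | 1 ≤ j ∧ j ≤ N - 1 ∧ ∃ m : ℕ, k^[m] j = v}) v := by
  classical
  have hvS : v ∈ {j : ℕ | 1 ≤ j ∧ j ≤ N - 1 ∧ ∃ m : ℕ, k^[m] j = v} :=
    ⟨hv1, hv2, 0, rfl⟩
  -- basic step lemma
  have step : ∀ x, 1 ≤ x → x ≤ N → x ≤ k x ∧ k x ≤ N ∧ 1 ≤ k x := by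
    intro x hx1 hxN
    by_cases h : x = N
    · subst h; rw [hfix]; omega
    · obtain ⟨h1, h2⟩ := harc x hx1 (by omega)
      omega
  have orbit : ∀ m x, 1 ≤ x → x ≤ N → x ≤ k^[m] x ∧ k^[m] x ≤ N ∧ 1 ≤ k^[m] x := by
    intro m
    induction m with
    | zero =>
      intro x hx1 hxN
      simp only [Function.iterate_zero_apply]
      exact ⟨le_refl x, hxN, hx1⟩
    | succ n ih =>
      intro x hx1 hxN
      obtain ⟨h1, h2, h3⟩ := ih x hx1 hxN
      obtain ⟨g1, g2, g3⟩ := step _ h3 h2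
      rw [Function.iterate_succ_apply']
      exact ⟨le_trans h1 g1, g2, g3⟩
  have mono : ∀ i j x, i ≤ j → 1 ≤ x → x ≤ N → k^[i] x ≤ k^[j] x := by
    intro i j x hij hx1 hxN
    have h1 := orbit i x hx1 hxN
    have h2 := orbit (j - i) (k^[i] x) h1.2.2 h1.2.1
    calc k^[i] x ≤ k^[j - i] (k^[i] x) := h2.1
      _ = k^[j] x := by rw [← Function.iterate_add_apply]; congr 1; omega
  have growth : ∀ x, 1 ≤ x → x ≤ N → ∃ m, v ≤ k^[m] x := by
    intro x hx1 hxN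
    have key : ∀ m, min N (x + m) ≤ k^[m] x := by
      intro m
      induction m with
      | zero => simp only [Function.iterate_zero_apply, Nat.add_zero]; omega
      | succ n ih =>
        obtain ⟨h1, h2, h3⟩ := orbit n x hx1 hxN
        rw [Function.iterate_succ_apply']
        by_cases hn : k^[n] x = N
        · rw [hn, hfix]; omega
        · obtain ⟨g1, g2⟩ := harc (k^[n] x) h3 (by omega)
          omega
    refine ⟨v, ?_⟩
    have := key v
    omega
  apply Set.eq_of_subset_of_subset
  · rintro j ⟨hj1, hj2, m, hm⟩
    refine ⟨Nat.sInf_le ⟨hj1, hj2, m, hm⟩, ?_⟩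
    have := orbit m j hj1 (by omega)
    omega
  · rintro j ⟨hjl, hjv⟩
    have hlS := Nat.sInf_mem (⟨v, hvS⟩ : {j : ℕ | 1 ≤ j ∧ j ≤ N - 1 ∧ ∃ m : ℕ, k^[m] j = v}.Nonempty)
    obtain ⟨hl1, hl2, p, hp⟩ := hlS
    have hj1 : 1 ≤ j := le_trans hl1 hjl
    refine ⟨hj1, by omega, ?_⟩
    by_cases hjv' : j = v
    · exact ⟨0, by simp [hjv']⟩
    have hjlt : j < v := lt_of_le_of_ne hjv hjv'
    have hjN : j ≤ N := by omega
    have hex : ∃ m, v ≤ k^[m] j := growth j hj1 hjN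
    have hm : v ≤ k^[Nat.find hex] j := Nat.find_spec hex
    have hm0 : Nat.find hex ≠ 0 := by
      intro h
      rw [h] at hm; simp at hm; omega
    obtain ⟨m', hm'⟩ : ∃ m', Nat.find hex = m' + 1 := ⟨Nat.find hex - 1, by omega⟩
    have hav : k^[m'] j < v := by
      have := Nat.find_min hex (m := m') (by omega)
      omega
    -- a := k^[m'] j ; k a = k^[m'+1] j ≥ v
    have hka : v ≤ k (k^[m'] j) := by
      have h := Function.iterate_succ_apply' k m' j
      rw [← h, Nat.succ_eq_add_one, ← hm']; exact hm
    by_cases hkav : k (k^[m'] j) = v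
    · exact ⟨m' + 1, by rw [Function.iterate_succ_apply']; exact hkav⟩
    exfalso
    have hkagt : v < k (k^[m'] j) := lt_of_le_of_ne hka (Ne.symm hkav)
    obtain ⟨hja, haN, ha1⟩ := orbit m' j hj1 hjN
    have hla : sInf {j : ℕ | 1 ≤ j ∧ j ≤ N - 1 ∧ ∃ m : ℕ, k^[m] j = v} ≤ k^[m'] j :=
      le_trans hjl hja
    set l := sInf {j : ℕ | 1 ≤ j ∧ j ≤ N - 1 ∧ ∃ m : ℕ, k^[m] j = v} with hldef
    have hex2 : ∃ q, k^[m'] j < k^[q] l := ⟨p, by rw [hp]; exact hav⟩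
    have hq : k^[m'] j < k^[Nat.find hex2] l := Nat.find_spec hex2
    have hq0 : Nat.find hex2 ≠ 0 := by
      intro h
      rw [h] at hq; simp at hq; omega
    obtain ⟨q', hq'⟩ : ∃ q', Nat.find hex2 = q' + 1 := ⟨Nat.find hex2 - 1, by omega⟩
    -- b := k^[q'] l
    have hba : k^[q'] l ≤ k^[m'] j := by
      have := Nat.find_min hex2 (m := q') (by omega)
      omega
    have hkb : k (k^[q'] l) = k^[Nat.find hex2] l := by
      rw [hq']; exact (Function.iterate_succ_apply' k q' l).symm
    have hqp : Nat.find hex2 ≤ p := Nat.find_le (by rw [hp]; exact hav)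
    have hkbv : k (k^[q'] l) ≤ v := by
      rw [hkb, ← hp]
      exact mono _ p l hqp hl1 (by omega)
    rcases eq_or_lt_of_le hba with hbea | hblt
    · -- b = a : then v is in the orbit of a, but k a > v, contradiction
      have hva : k^[p - q'] (k^[m'] j) = v := by
        rw [← hbea, ← Function.iterate_add_apply, ← hp]
        congr 1
        omega
      have hr0 : p - q' ≠ 0 := by
        intro h; rw [h] at hva; simp at hva; omega
      obtain ⟨r', hr'⟩ : ∃ r', p - q' = r' + 1 := ⟨p - q' - 1, by omega⟩
      obtain ⟨s1, s2, s3⟩ := step (k^[m'] j) ha1 haN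
      have h2 : k^[p - q'] (k^[m'] j) = k^[r'] (k (k^[m'] j)) := by
        rw [hr']; exact Function.iterate_succ_apply k r' _
      have h3 : k (k^[m'] j) ≤ k^[r'] (k (k^[m'] j)) := (orbit r' _ s3 s2).1
      rw [← h2, hva] at h3
      omega
    · -- b < a : crossing
      have hb1 : 1 ≤ k^[q'] l := (orbit q' l hl1 (by omega)).2.2
      have haN1 : k^[m'] j ≤ N - 1 := by omega
      exact hnc (k^[q'] l) (k^[m'] j) hb1 haN1 ⟨hblt, by omega, by omega⟩
end

section
/- For even N, the number of self-dual basic arc diagrams on N nodes equals the Catalan number C_{N/2−1} = (2/N)·C(N−2, N/2−1), via the bijection G₀ ↦ G₀ ⋈ G₀^A from basic arc diagrams on N/2 nodes; for odd N ≥ 2 there are no self-dual vertex diagrams. -/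
/-- Arc diagram on `N` nodes, encoded as a function `k : ℕ → ℕ` with
`j < k j ≤ N` for `j ∈ {1,…,N-1}` and `k` the identity elsewhere
(in particular `k N = N`, so that increasing paths to `N` are obtained by
iterating `k`). -/
def IsArcDiagram (N : ℕ) (k : ℕ → ℕ) : Prop :=
  (∀ j, 1 ≤ j → j ≤ N - 1 → j < k j ∧ k j ≤ N) ∧
  (∀ j, ¬(1 ≤ j ∧ j ≤ N - 1) → k j = j)

/-- Non-crossing (basic) arc diagram: no pair `j₁ < j₂ < k(j₁) < k(j₂)`. -/
def IsNonCrossing (N : ℕ) (k : ℕ → ℕ) : Prop :=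
  ∀ j₁ j₂, 1 ≤ j₁ → j₂ ≤ N - 1 → ¬(j₁ < j₂ ∧ j₂ < k j₁ ∧ k j₁ < k j₂)

/-- `ℓ(v)`: the smallest descendant of `v`, i.e. the least `u ≥ 1` whose
increasing path `u, k(u), k(k(u)), …` passes through `v`. -/
noncomputable def ellFn (k : ℕ → ℕ) (v : ℕ) : ℕ :=
  sInf {u : ℕ | 1 ≤ u ∧ ∃ m : ℕ, k^[m] u = v}

/-- Self-duality of a basic arc diagram: its H-dual (the arc diagram
`j ↦ N - ℓ(N - j) + 1`, which is the recursive dual `(G_L ⋈ G_R)^A = G_R^A ⋈ G_L^A`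
for non-crossing diagrams) coincides with the diagram itself. -/
def IsSelfDual (N : ℕ) (k : ℕ → ℕ) : Prop :=
  ∀ j, 1 ≤ j → j ≤ N - 1 → k j = N - ellFn k (N - j) + 1

namespace SDAD

/-- `u` reaches `v` by iterating `k`. -/
def reaches (k : ℕ → ℕ) (u v : ℕ) : Prop := ∃ m, k^[m] u = v

variable {N : ℕ} {k : ℕ → ℕ}

lemma arc_le_apply (hk : IsArcDiagram N k) (x : ℕ) : x ≤ k x := by
  by_cases h : 1 ≤ x ∧ x ≤ N - 1
  · exact le_of_lt (hk.1 x h.1 h.2).1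
  · rw [hk.2 x h]

lemma arc_apply_le (hk : IsArcDiagram N k) {x : ℕ} (hx : x ≤ N) : k x ≤ N := by
  by_cases h : 1 ≤ x ∧ x ≤ N - 1
  · exact (hk.1 x h.1 h.2).2
  · rw [hk.2 x h]; exact hx

lemma arc_fixed_top (hk : IsArcDiagram N k) : k N = N := by
  apply hk.2; omega

lemma arc_zero (hk : IsArcDiagram N k) : k 0 = 0 := by
  apply hk.2; omega

lemma iter_mono {f : ℕ → ℕ} (hf : ∀ x, x ≤ f x) {u : ℕ} : ∀ {i j : ℕ}, i ≤ j →
    f^[i] u ≤ f^[j] u := by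
  intro i j hij
  induction j with
  | zero => simp_all
  | succ j ih =>
    rcases Nat.lt_or_ge i (j+1) with h | h
    · calc f^[i] u ≤ f^[j] u := ih (by omega)
        _ ≤ f (f^[j] u) := hf _
        _ = f^[j+1] u := (Function.iterate_succ_apply' f j u).symm
    · have : i = j + 1 := by omega
      subst this; rfl

lemma iter_le_self {f : ℕ → ℕ} (hf : ∀ x, x ≤ f x) (u m : ℕ) : u ≤ f^[m] u :=
  iter_mono hf (Nat.zero_le m)

lemma reaches_le (hk : IsArcDiagram N k) {u v : ℕ} (h : reaches k u v) : u ≤ v := by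
  obtain ⟨m, hm⟩ := h
  exact hm ▸ iter_le_self (arc_le_apply hk) u m

lemma reaches_self (u : ℕ) : reaches k u u := ⟨0, rfl⟩

lemma reaches_trans {u v w : ℕ} (h1 : reaches k u v) (h2 : reaches k v w) :
    reaches k u w := by
  obtain ⟨m, hm⟩ := h1; obtain ⟨m', hm'⟩ := h2
  exact ⟨m' + m, by rw [Function.iterate_add_apply, hm, hm']⟩

lemma reaches_step {u : ℕ} (v : ℕ) (h : reaches k (k u) v) : reaches k u v := by
  obtain ⟨m, hm⟩ := h
  exact ⟨m + 1, by rw [Function.iterate_add_apply]; simpa using hm⟩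

lemma iter_le_top (hk : IsArcDiagram N k) {u : ℕ} (hu : u ≤ N) (m : ℕ) : k^[m] u ≤ N := by
  induction m with
  | zero => simpa
  | succ m ih => rw [Function.iterate_succ_apply']; exact arc_apply_le hk ih

lemma reaches_le_top (hk : IsArcDiagram N k) {u v : ℕ} (hu : u ≤ N) (h : reaches k u v) :
    v ≤ N := by
  obtain ⟨m, hm⟩ := h; exact hm ▸ iter_le_top hk hu m

/- ell basic facts -/

lemma ell_le (v : ℕ) {u : ℕ} (hu : 1 ≤ u) (h : reaches k u v) : ellFn k v ≤ u :=
  Nat.sInf_le ⟨hu, h⟩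

lemma ell_spec {v : ℕ} (hv : 1 ≤ v) : 1 ≤ ellFn k v ∧ reaches k (ellFn k v) v :=
  Nat.sInf_mem (⟨v, hv, 0, rfl⟩ : {u : ℕ | 1 ≤ u ∧ ∃ m : ℕ, k^[m] u = v}.Nonempty)

lemma ell_pos {v : ℕ} (hv : 1 ≤ v) : 1 ≤ ellFn k v := (ell_spec hv).1

lemma ell_reaches {v : ℕ} (hv : 1 ≤ v) : reaches k (ellFn k v) v := (ell_spec hv).2

lemma ell_le_self {v : ℕ} (hv : 1 ≤ v) : ellFn k v ≤ v := ell_le v hv (reaches_self v)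

lemma ell_zero (hk : IsArcDiagram N k) : ellFn k 0 = 0 := by
  unfold ellFn
  convert Nat.sInf_empty
  ext u
  simp only [Set.mem_setOf_eq, Set.mem_empty_iff_false, iff_false, not_and]
  intro hu ⟨m, hm⟩
  have := iter_le_self (arc_le_apply hk) u m
  omega

/- interval lemma -/

lemma crossing_index {f : ℕ → ℕ} (hf : ∀ x, x ≤ f x) {u a : ℕ} :
    ∀ {m}, u ≤ a → a < f^[m] u → ∃ i, i < m ∧ f^[i] u ≤ a ∧ a < f^[i+1] u := by
  intro m
  induction m with
  | zero => intro h1 h2; simp at h2; omega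
  | succ m ih =>
    intro h1 h2
    by_cases hc : a < f^[m] u
    · obtain ⟨i, hi, h3, h4⟩ := ih h1 hc; exact ⟨i, by omega, h3, h4⟩
    · push_neg at hc
      refine ⟨m, by omega, hc, ?_⟩
      exact h2

lemma interval_reaches (hk : IsArcDiagram N k) (hnc : IsNonCrossing N k) :
    ∀ d {u u' v : ℕ}, 1 ≤ u → u ≤ u' → u' ≤ v → v ≤ N → v - u' ≤ d →
      reaches k u v → reaches k u' v := by
  intro d
  induction d with
  | zero =>
    intro u u' v h1 h2 h3 h4 h5 h6
    have : u' = v := by omega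
    subst this; exact reaches_self u'
  | succ d ih =>
    intro u u' v h1 h2 h3 h4 h5 h6
    rcases eq_or_lt_of_le h3 with he | hlt
    · subst he; exact reaches_self u'
    obtain ⟨m, hm⟩ := h6
    have hcross : u' < k^[m] u := hm ▸ hlt
    obtain ⟨i, him, hb1, hb2⟩ := crossing_index (arc_le_apply hk) h2 hcross
    rcases eq_or_lt_of_le hb1 with hbe | hblt
    · -- u' on the orbit
      refine ⟨m - i, ?_⟩
      rw [← hbe, ← Function.iterate_add_apply]
      rw [show m - i + i = m by omega]
      exact hm
    · -- b < u' < k b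
      set b := k^[i] u with hbdef
      have hub : u ≤ b := iter_le_self (arc_le_apply hk) u i
      have hkb : k b = k^[i+1] u := (Function.iterate_succ_apply' k i u).symm
      have hkb_le : k b ≤ v := by
        rw [hkb, ← hm]; exact iter_mono (arc_le_apply hk) (by omega)
      have hne := hnc b u' (by omega) (by omega)
      have hku' : k u' ≤ k b := by
        by_contra hcon
        push_neg at hcon
        exact hne ⟨hblt, by rw [hkb]; exact hb2, hcon⟩
      have hu'lt : u' < k u' := (hk.1 u' (by omega) (by omega)).1
      have := ih (u := u) (u' := k u') (v := v) h1 (by omega) (by omega) h4 (by omega) ⟨m, hm⟩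
      exact reaches_step v this

lemma reaches_of_ell_le (hk : IsArcDiagram N k) (hnc : IsNonCrossing N k)
    {u v : ℕ} (hv1 : 1 ≤ v) (hvN : v ≤ N) (h1 : ellFn k v ≤ u) (h2 : u ≤ v) :
    reaches k u v :=
  interval_reaches hk hnc (v - u) (ell_pos hv1) h1 h2 hvN le_rfl (ell_reaches hv1)

lemma reaches_top (hk : IsArcDiagram N k) :
    ∀ d {u : ℕ}, 1 ≤ u → u ≤ N → N - u ≤ d → reaches k u N := by
  intro d
  induction d with
  | zero => intro u h1 h2 h3
            have : u = N := by omega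
            subst this; exact reaches_self u
  | succ d ih =>
    intro u h1 h2 h3
    rcases eq_or_lt_of_le h2 with he | hlt
    · subst he; exact reaches_self u
    · have h4 := (hk.1 u h1 (by omega)).1
      have h5 := (hk.1 u h1 (by omega)).2
      exact reaches_step N (ih (by omega) h5 (by omega))

lemma ell_top (hk : IsArcDiagram N k) (hN : 1 ≤ N) : ellFn k N = 1 := by
  have h := ell_le (k := k) N (le_refl 1) (reaches_top hk N (le_refl 1) hN (by omega))
  have := ell_pos (k := k) hN
  omega

end SDAD

namespace SDAD

variable {N : ℕ} {k : ℕ → ℕ}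

/- the `g` dynamics: `g m = ellFn k m - 1` -/

lemma g_le (hk : IsArcDiagram N k) (m : ℕ) : ellFn k m - 1 ≤ m := by
  rcases Nat.eq_zero_or_pos m with h | h
  · subst h; rw [ell_zero hk]
  · have := ell_le_self (k := k) h; omega

lemma g_iter_le (hk : IsArcDiagram N k) (m : ℕ) :
    ∀ s, (fun x => ellFn k x - 1)^[s] m ≤ m := by
  intro s
  induction s with
  | zero => rfl
  | succ s ih =>
    rw [Function.iterate_succ_apply']
    exact le_trans (g_le hk _) ih

lemma g_orbit_ge (hk : IsArcDiagram N k) {m i : ℕ} (h : ∃ s, (fun x => ellFn k x - 1)^[s] m = i) :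
    i ≤ m := by
  obtain ⟨s, hs⟩ := h
  exact hs ▸ g_iter_le hk m s

/-- (a): every `m ∈ [i, k i)` has `g`-orbit hitting `i`. -/
lemma orbit_hits (hk : IsArcDiagram N k) (hnc : IsNonCrossing N k)
    {i : ℕ} (hi1 : 1 ≤ i) (hiN : i ≤ N - 1) :
    ∀ d m, i ≤ m → m < k i → m - i ≤ d →
      ∃ s, (fun x => ellFn k x - 1)^[s] m = i := by
  have hki := hk.1 i hi1 hiN
  intro d
  induction d with
  | zero =>
    intro m h1 h2 h3
    have : m = i := by omega
    exact ⟨0, this⟩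
  | succ d ih =>
    intro m h1 h2 h3
    rcases eq_or_lt_of_le h1 with he | hlt
    · exact ⟨0, he.symm⟩
    · have hm1 : 1 ≤ m := by omega
      have hmN : m ≤ N := by omega
      have hellm : 1 ≤ ellFn k m := ell_pos hm1
      have hgi : i < ellFn k m := by
        by_contra hcon
        push_neg at hcon
        have hre : reaches k i m := reaches_of_ell_le hk hnc hm1 hmN hcon (by omega)
        obtain ⟨s, hs⟩ := hre
        have hs0 : s ≠ 0 := by intro h; rw [h] at hs; simp at hs; omega
        have : k i ≤ k^[s] i := by
          calc k i = k^[1] i := by simp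
          _ ≤ k^[s] i := iter_mono (arc_le_apply hk) (by omega)
        omega
      have hgm : ellFn k m - 1 < m := by
        have := ell_le_self (k := k) hm1; omega
      obtain ⟨s, hs⟩ := ih (ellFn k m - 1) (by omega) (by omega) (by omega)
      exact ⟨s + 1, by rw [Function.iterate_add_apply]; simpa using hs⟩

/-- (b): if the `g`-orbit of `m ≤ N` hits `i` then `m < k i`. -/
lemma orbit_bound (hk : IsArcDiagram N k) (hnc : IsNonCrossing N k)
    {i : ℕ} (hi1 : 1 ≤ i) (hiN : i ≤ N - 1) :
    ∀ d m, m ≤ N → m - i ≤ d →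
      (∃ s, (fun x => ellFn k x - 1)^[s] m = i) → m < k i := by
  have hki := hk.1 i hi1 hiN
  intro d
  induction d with
  | zero =>
    intro m hmN h3 h4
    obtain ⟨s, hs⟩ := h4
    have h5 : i ≤ m := by rw [← hs]; exact g_iter_le hk m s
    have h6 : m = i := by omega
    rw [h6]; exact hki.1
  | succ d ih =>
    intro m hmN h3 h4
    have him := g_orbit_ge hk h4
    rcases eq_or_lt_of_le him with he | hlt
    · omega
    · obtain ⟨s, hs⟩ := h4
      have hs0 : s ≠ 0 := by intro h; rw [h] at hs; simp at hs; omega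
      have hstep : (fun x => ellFn k x - 1)^[s-1] (ellFn k m - 1) = i := by
        have : s = (s - 1) + 1 := by omega
        rw [this, Function.iterate_add_apply] at hs
        simpa using hs
      have hm1 : 1 ≤ m := by omega
      have hgm : ellFn k m - 1 < m := by have := ell_le_self (k := k) hm1; omega
      have hige : i ≤ ellFn k m - 1 := g_orbit_ge hk ⟨s-1, hstep⟩
      have hless : ellFn k m - 1 < k i := ih (ellFn k m - 1) (by omega) (by omega) ⟨s-1, hstep⟩
      by_contra hcon
      push_neg at hcon
      -- m ≥ k i : derive i reaches m, so ellFn k m ≤ i, contradiction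
      have h5 : reaches k (k i) m :=
        reaches_of_ell_le hk hnc hm1 hmN (by omega) hcon
      have h6 : reaches k i m := reaches_step m h5
      have h7 : ellFn k m ≤ i := ell_le m hi1 h6
      omega

/- the dual diagram -/

noncomputable def dualFn (n : ℕ) (k : ℕ → ℕ) : ℕ → ℕ :=
  fun j => if 1 ≤ j ∧ j ≤ n - 1 then n + 1 - ellFn k (n - j) else j

lemma dual_arc (hk : IsArcDiagram N k) : IsArcDiagram N (dualFn N k) := by
  constructor
  · intro j h1 h2
    have hw1 : 1 ≤ N - j := by omega
    have h3 := ell_pos (k := k) hw1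
    have h4 := ell_le_self (k := k) hw1
    unfold dualFn
    rw [if_pos ⟨h1, h2⟩]
    omega
  · intro j h
    unfold dualFn
    rw [if_neg h]

lemma dual_step (hk : IsArcDiagram N k) {x : ℕ} (h1 : 1 ≤ x) (h2 : x ≤ N) :
    1 ≤ dualFn N k x ∧ dualFn N k x ≤ N ∧
      N - dualFn N k x = ellFn k (N - x) - 1 := by
  by_cases hc : x ≤ N - 1
  · have hw1 : 1 ≤ N - x := by omega
    have h3 := ell_pos (k := k) hw1
    have h4 := ell_le_self (k := k) hw1
    unfold dualFn
    rw [if_pos ⟨h1, hc⟩]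
    omega
  · have hx : x = N := by omega
    have h0 : dualFn N k x = x := by unfold dualFn; rw [if_neg (by omega)]
    rw [h0]
    refine ⟨h1, h2, ?_⟩
    have h5 : N - x = 0 := by omega
    rw [h5, ell_zero hk]

lemma dual_iterate (hk : IsArcDiagram N k) :
    ∀ m {x : ℕ}, 1 ≤ x → x ≤ N →
      1 ≤ (dualFn N k)^[m] x ∧ (dualFn N k)^[m] x ≤ N ∧
        N - (dualFn N k)^[m] x = (fun w => ellFn k w - 1)^[m] (N - x) := by
  intro m
  induction m with
  | zero => intro x h1 h2; exact ⟨h1, h2, rfl⟩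
  | succ m ih =>
    intro x h1 h2
    obtain ⟨s1, s2, s3⟩ := dual_step hk h1 h2
    obtain ⟨t1, t2, t3⟩ := ih s1 s2
    refine ⟨?_, ?_, ?_⟩
    · rw [Function.iterate_succ_apply]; exact t1
    · rw [Function.iterate_succ_apply]; exact t2
    · rw [Function.iterate_succ_apply, Function.iterate_succ_apply]
      rw [t3, s3]

lemma dual_nc (hk : IsArcDiagram N k) (hnc : IsNonCrossing N k) :
    IsNonCrossing N (dualFn N k) := by
  intro j₁ j₂ h1 h2
  rintro ⟨hj, hj2, hj3⟩
  have hj1' : j₁ ≤ N - 1 := by omega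
  set w₁ := N - j₁ with hw1
  set w₂ := N - j₂ with hw2
  have hww : w₂ < w₁ := by omega
  have hw2pos : 1 ≤ w₂ := by omega
  have hw1le : w₁ ≤ N - 1 := by omega
  have e1 : dualFn N k j₁ = N + 1 - ellFn k w₁ := by
    unfold dualFn; rw [if_pos ⟨h1, hj1'⟩]
  have e2 : dualFn N k j₂ = N + 1 - ellFn k w₂ := by
    unfold dualFn; rw [if_pos ⟨by omega, h2⟩]
  have b1 := ell_pos (k := k) hw2pos
  have b2 := ell_le_self (k := k) hw2pos
  have b3 := ell_pos (k := k) (show 1 ≤ w₁ by omega)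
  have b4 := ell_le_self (k := k) (show 1 ≤ w₁ by omega)
  have hle : ellFn k w₁ ≤ w₂ := by rw [e1] at hj2; omega
  have hlt : ellFn k w₂ < ellFn k w₁ := by rw [e1, e2] at hj3; omega
  -- contradiction: ℓ w₂ reaches w₂ reaches w₁, so ℓ w₁ ≤ ℓ w₂
  have r1 : reaches k (ellFn k w₂) w₂ := ell_reaches hw2pos
  have r2 : reaches k w₂ w₁ := reaches_of_ell_le hk hnc (by omega) (by omega) hle (by omega)
  have r3 := reaches_trans r1 r2
  have := ell_le w₁ b1 r3
  omega

/-- L3: the ell function of the dual equals the (reflected) original diagram. -/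
lemma ell_dual (hk : IsArcDiagram N k) (hnc : IsNonCrossing N k)
    {t : ℕ} (ht1 : 1 ≤ t) (htN : t ≤ N - 1) :
    ellFn (dualFn N k) t = N + 1 - k (N - t) := by
  set i := N - t with hidef
  have hi1 : 1 ≤ i := by omega
  have hiN : i ≤ N - 1 := by omega
  have hki := hk.1 i hi1 hiN
  have hA := dual_arc hk
  apply IsLeast.csInf_eq
  constructor
  · -- membership : N + 1 - k i reaches t under the dual
    refine ⟨by omega, ?_⟩
    have hu0 : 1 ≤ N + 1 - k i := by omega
    have hu0N : N + 1 - k i ≤ N := by omega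
    obtain ⟨s, hs⟩ := orbit_hits hk hnc hi1 hiN (k i - 1 - i) (k i - 1) (by omega) (by omega) (by omega)
    obtain ⟨t1, t2, t3⟩ := dual_iterate hk s hu0 hu0N
    have : N - (N + 1 - k i) = k i - 1 := by omega
    rw [this, hs] at t3
    exact ⟨s, by omega⟩
  · -- lower bound
    rintro u ⟨hu1, m, hm⟩
    have hut : u ≤ t := by
      have := iter_le_self (arc_le_apply hA) u m
      omega
    obtain ⟨t1, t2, t3⟩ := dual_iterate hk m hu1 (by omega)
    rw [hm] at t3
    have hhit : (fun w => ellFn k w - 1)^[m] (N - u) = i := by rw [← t3]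
    have := orbit_bound hk hnc hi1 hiN (N - u) (N - u) (by omega) (by omega) ⟨m, hhit⟩
    omega

end SDAD

namespace SDAD

variable {N : ℕ} {k : ℕ → ℕ}

lemma selfdual_eq_dual (hk : IsArcDiagram N k) (hsd : IsSelfDual N k) :
    k = dualFn N k := by
  funext j
  by_cases h : 1 ≤ j ∧ j ≤ N - 1
  · have e1 : dualFn N k j = N + 1 - ellFn k (N - j) := by
      unfold dualFn; rw [if_pos h]
    have e2 := hsd j h.1 h.2
    have b1 := ell_le_self (k := k) (show 1 ≤ N - j by omega)
    omega
  · have e1 : dualFn N k j = j := by unfold dualFn; rw [if_neg h]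
    rw [e1, hk.2 j h]

lemma selfdual_star (hk : IsArcDiagram N k) (hnc : IsNonCrossing N k)
    (hsd : IsSelfDual N k) {t : ℕ} (h1 : 1 ≤ t) (h2 : t ≤ N - 1) :
    ellFn k t = N + 1 - k (N - t) := by
  have := ell_dual hk hnc h1 h2
  rwa [← selfdual_eq_dual hk hsd] at this

lemma reaches_after (hk : IsArcDiagram N k) {u a b : ℕ}
    (ha : reaches k u a) (hb : reaches k u b) (hka : k a = N) (hab : a ≤ b) :
    a = b ∨ b = N := by
  obtain ⟨s, hs⟩ := ha
  obtain ⟨s', hs'⟩ := hb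
  rcases le_or_gt s' s with h | h
  · left
    have := iter_mono (arc_le_apply hk) (u := u) h
    omega
  · right
    have hb2 : b = k^[s' - s] a := by
      rw [← hs, ← Function.iterate_add_apply]
      rw [show s' - s + s = s' by omega]
      exact hs'.symm
    have : k^[s' - s] a = N := by
      have hss : s' - s = (s' - s - 1) + 1 := by omega
      rw [hss, Function.iterate_succ_apply, hka]
      -- k^[_] N = N
      have : ∀ m, k^[m] N = N := by
        intro m
        induction m with
        | zero => rfl
        | succ m ih => rw [Function.iterate_succ_apply', ih, arc_fixed_top hk]
      exact this _
    omega

theorem selfdual_structure (hN : 2 ≤ N) (hk : IsArcDiagram N k)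
    (hnc : IsNonCrossing N k) (hsd : IsSelfDual N k) :
    ∃ n, N = 2 * n ∧ k n = N ∧ (∀ j, 1 ≤ j → j ≤ n - 1 → k j ≤ n) := by
  have hr : reaches k 1 N := reaches_top hk N (le_refl 1) (by omega) (by omega)
  have hex : ∃ m, k^[m] 1 = N := hr
  classical
  set m := Nat.find hex with hmdef
  have hm : k^[m] 1 = N := Nat.find_spec hex
  have hm1 : 1 ≤ m := by
    rcases Nat.eq_zero_or_pos m with h | h
    · exfalso; rw [h] at hm; simp at hm; omega
    · exact h
  set x := k^[m-1] 1 with hxdef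
  have hx_reach : reaches k 1 x := ⟨m - 1, rfl⟩
  have hkx : k x = N := by
    have h7 : k^[m-1+1] 1 = N := by rw [show m-1+1 = m by omega]; exact hm
    rw [Function.iterate_succ_apply'] at h7
    rw [hxdef]
    exact h7
  have hxne : x ≠ N := by
    intro h
    have := Nat.find_min hex (show m - 1 < m by omega)
    rw [← hxdef] at this
    exact this h
  have hxN : x ≤ N := iter_le_top hk (by omega) (m-1)
  have hx1 : 1 ≤ x := iter_le_self (arc_le_apply hk) 1 (m-1)
  have hxN' : x ≤ N - 1 := by omega
  -- ℓ x = 1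
  have hellx : ellFn k x = 1 := by
    have h1 := ell_le x (le_refl 1) hx_reach
    have h2 := ell_pos (k := k) hx1
    omega
  -- k (N - x) = N
  have hkNx : k (N - x) = N := by
    have := selfdual_star hk hnc hsd hx1 hxN'
    rw [hellx] at this
    have hb : k (N - x) ≤ N := arc_apply_le hk (by omega)
    omega
  -- 1 reaches N - x
  have hNx1 : 1 ≤ N - x := by omega
  have hNxN' : N - x ≤ N - 1 := by omega
  have hreachNx : reaches k 1 (N - x) := by
    have := selfdual_star hk hnc hsd hNx1 hNxN'
    rw [show N - (N - x) = x by omega, hkx] at this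
    have h2 : ellFn k (N - x) = 1 := by omega
    have := ell_reaches (k := k) hNx1
    rwa [h2] at this
  -- x = N - x
  have hxeq : x = N - x := by
    rcases le_or_gt x (N - x) with h | h
    · rcases reaches_after hk hx_reach hreachNx hkx h with h1 | h1
      · exact h1
      · omega
    · rcases reaches_after hk hreachNx hx_reach hkNx (by omega) with h1 | h1
      · omega
      · omega
  refine ⟨x, by omega, hkx, ?_⟩
  intro j hj1 hj2
  by_contra hcon
  push_neg at hcon
  have hkjN : k j ≤ N := arc_apply_le hk (by omega)
  have hnc1 := hnc j x hj1 hxN'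
  have hkj : k j = N := by
    by_contra h9
    exact hnc1 ⟨by omega, hcon, by omega⟩
  have ht1 : 1 ≤ N - j := by omega
  have ht2 : N - j ≤ N - 1 := by omega
  have hst := selfdual_star hk hnc hsd ht1 ht2
  rw [show N - (N - j) = j by omega, hkj] at hst
  have h9 : ellFn k (N - j) = 1 := by omega
  have hr9 : reaches k 1 (N - j) := by
    have := ell_reaches (k := k) ht1; rwa [h9] at this
  have hle : x ≤ N - j := by omega
  rcases reaches_after hk hx_reach hr9 hkx hle with h | h <;> omega

end SDAD

namespace SDAD

variable {n : ℕ} {k : ℕ → ℕ}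

/- congruence of reaches / ellFn for functions agreeing below `v` -/

lemma reaches_congr {f g : ℕ → ℕ} {v u : ℕ} (hf : ∀ x, x ≤ f x)
    (h : ∀ x, x < v → f x = g x) (hr : ∃ m, f^[m] u = v) : ∃ m, g^[m] u = v := by
  classical
  have hex := hr
  set m := Nat.find hex with hmdef
  have hm : f^[m] u = v := Nat.find_spec hex
  have key : ∀ i, i ≤ m → g^[i] u = f^[i] u := by
    intro i
    induction i with
    | zero => intro _; rfl
    | succ i ih =>
      intro hi
      rw [Function.iterate_succ_apply', Function.iterate_succ_apply']
      rw [ih (by omega)]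
      have hlt : f^[i] u < v := by
        have h1 : f^[i] u ≤ f^[m] u := iter_mono hf (by omega)
        have h2 : f^[i] u ≠ v := fun hc => Nat.find_min hex (show i < m by omega) hc
        omega
      rw [h _ hlt]
  exact ⟨m, by rw [key m le_rfl]; exact hm⟩

lemma ellFn_congr {f g : ℕ → ℕ} {v : ℕ} (hf : ∀ x, x ≤ f x) (hg : ∀ x, x ≤ g x)
    (h : ∀ x, x < v → f x = g x) : ellFn f v = ellFn g v := by
  unfold ellFn
  congr 1
  ext u
  simp only [Set.mem_setOf_eq]
  constructor
  · rintro ⟨h1, h2⟩; exact ⟨h1, reaches_congr hf h h2⟩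
  · rintro ⟨h1, h2⟩; exact ⟨h1, reaches_congr hg (fun x hx => (h x hx).symm) h2⟩

/- the gluing map `G₀ ↦ G₀ ⋈ G₀^A` -/

noncomputable def glueFn (n : ℕ) (k : ℕ → ℕ) : ℕ → ℕ := fun j =>
  if 1 ≤ j ∧ j ≤ n - 1 then k j
  else if j = n then 2 * n
  else if n + 1 ≤ j ∧ j ≤ 2*n - 1 then n + dualFn n k (j - n)
  else j

lemma glue_lo {j : ℕ} (h1 : 1 ≤ j) (h2 : j ≤ n - 1) : glueFn n k j = k j := by
  unfold glueFn; rw [if_pos ⟨h1, h2⟩]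

lemma glue_mid (hn : 1 ≤ n) : glueFn n k n = 2 * n := by
  unfold glueFn; rw [if_neg (by omega), if_pos rfl]

lemma glue_hi {j : ℕ} (h1 : n + 1 ≤ j) (h2 : j ≤ 2*n - 1) :
    glueFn n k j = n + dualFn n k (j - n) := by
  unfold glueFn; rw [if_neg (by omega), if_neg (by omega), if_pos ⟨h1, h2⟩]

lemma glue_other {j : ℕ} (h : ¬(1 ≤ j ∧ j ≤ 2*n - 1)) : glueFn n k j = j := by
  unfold glueFn
  rcases Nat.eq_zero_or_pos n with hn | hn
  · subst hn
    rw [if_neg (by omega)]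
    by_cases hj : j = 0
    · rw [if_pos hj, hj]
    · rw [if_neg hj, if_neg (by omega)]
  · rw [if_neg (by omega), if_neg (by omega), if_neg (by omega)]

lemma glue_arc (hk : IsArcDiagram n k) (hn : 1 ≤ n) :
    IsArcDiagram (2 * n) (glueFn n k) := by
  have hA := dual_arc hk
  constructor
  · intro j h1 h2
    rcases Nat.lt_or_ge j n with hj | hj
    · rw [glue_lo h1 (by omega)]
      have := hk.1 j h1 (by omega)
      omega
    · rcases eq_or_lt_of_le hj with he | hlt
      · rw [← he, glue_mid hn]; omega
      · rw [glue_hi (by omega) (by omega)]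
        have := hA.1 (j - n) (by omega) (by omega)
        omega
  · intro j h
    exact glue_other (by omega)

lemma glue_nc (hk : IsArcDiagram n k) (hnc : IsNonCrossing n k) (hn : 1 ≤ n) :
    IsNonCrossing (2 * n) (glueFn n k) := by
  have hA := dual_arc hk
  have hAnc := dual_nc hk hnc
  intro j₁ j₂ h1 h2
  rintro ⟨ha, hb, hc⟩
  rcases Nat.lt_or_ge j₁ n with hj | hj
  · -- j₁ in first half
    have e1 : glueFn n k j₁ = k j₁ := glue_lo h1 (by omega)
    have hkj : k j₁ ≤ n := (hk.1 j₁ h1 (by omega)).2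
    have hj2 : j₂ ≤ n - 1 := by omega
    have e2 : glueFn n k j₂ = k j₂ := glue_lo (by omega) hj2
    rw [e1] at hb hc
    rw [e2] at hc
    exact hnc j₁ j₂ h1 hj2 ⟨ha, hb, hc⟩
  · rcases eq_or_lt_of_le hj with he | hlt
    · -- j₁ = n
      rw [← he, glue_mid hn] at hb hc
      have hj2hi : n + 1 ≤ j₂ := by omega
      have e2 : glueFn n k j₂ = n + dualFn n k (j₂ - n) := glue_hi hj2hi h2
      have := (hA.1 (j₂ - n) (by omega) (by omega)).2
      rw [e2] at hc
      omega
    · -- both in second half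
      have e1 : glueFn n k j₁ = n + dualFn n k (j₁ - n) := glue_hi (by omega) (by omega)
      have e2 : glueFn n k j₂ = n + dualFn n k (j₂ - n) := glue_hi (by omega) h2
      rw [e1] at hb hc
      rw [e2] at hc
      exact hAnc (j₁ - n) (j₂ - n) (by omega) (by omega) ⟨by omega, by omega, by omega⟩

/- ellFn of the glued diagram -/

lemma glue_agree_lo (hk : IsArcDiagram n k) {x : ℕ} (hx : x < n) :
    glueFn n k x = k x := by
  rcases Nat.eq_zero_or_pos x with h | h
  · rw [h, arc_zero hk]
    exact glue_other (by omega)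
  · exact glue_lo h (by omega)

lemma ell_glue_lo (hk : IsArcDiagram n k) (hn : 1 ≤ n) {v : ℕ} (hv : v ≤ n) :
    ellFn (glueFn n k) v = ellFn k v := by
  apply ellFn_congr (arc_le_apply (glue_arc hk hn)) (arc_le_apply hk)
  intro x hx
  exact glue_agree_lo hk (by omega)

lemma glue_second_iter (hk : IsArcDiagram n k) (hn : 1 ≤ n) :
    ∀ m {s : ℕ}, 1 ≤ s → s ≤ n →
      (glueFn n k)^[m] (n + s) = n + (dualFn n k)^[m] s ∧
        1 ≤ (dualFn n k)^[m] s ∧ (dualFn n k)^[m] s ≤ n := by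
  have hA := dual_arc hk
  intro m
  induction m with
  | zero => intro s h1 h2; exact ⟨rfl, h1, h2⟩
  | succ m ih =>
    intro s h1 h2
    have hstep : glueFn n k (n + s) = n + dualFn n k s ∧
        1 ≤ dualFn n k s ∧ dualFn n k s ≤ n := by
      by_cases hc : s ≤ n - 1
      · have e : glueFn n k (n + s) = n + dualFn n k (n + s - n) :=
          glue_hi (by omega) (by omega)
        rw [show n + s - n = s by omega] at e
        have := hA.1 s h1 hc
        exact ⟨e, by omega, this.2⟩
      · have hs : s = n := by omega
        have e1 : dualFn n k s = s := hA.2 s (by omega)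
        have e2 : glueFn n k (n + s) = n + s := by
          rw [hs]; rw [show n + n = 2 * n by omega]
          exact glue_other (by omega)
        rw [e1, e2]
        exact ⟨rfl, h1, h2⟩
    obtain ⟨u1, u2, u3⟩ := ih hstep.2.1 hstep.2.2
    refine ⟨?_, ?_, ?_⟩
    · rw [Function.iterate_succ_apply, Function.iterate_succ_apply, hstep.1]
      exact u1
    · rw [Function.iterate_succ_apply]; exact u2
    · rw [Function.iterate_succ_apply]; exact u3

lemma glue_first_orbit (hk : IsArcDiagram n k) (hn : 1 ≤ n) {u : ℕ} (hu : u ≤ n) :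
    ∀ m, (glueFn n k)^[m] u ≤ n ∨ (glueFn n k)^[m] u = 2 * n := by
  intro m
  induction m with
  | zero => left; simpa
  | succ m ih =>
    rw [Function.iterate_succ_apply']
    rcases ih with h | h
    · rcases eq_or_lt_of_le h with he | hlt
      · right; rw [he]; exact glue_mid hn
      · left
        rw [glue_agree_lo hk hlt]
        have := arc_apply_le hk (show (glueFn n k)^[m] u ≤ n by omega)
        omega
    · right; rw [h]
      exact glue_other (by omega)

lemma ell_glue_hi (hk : IsArcDiagram n k) (hn : 1 ≤ n) {t : ℕ} (h1 : 1 ≤ t) (h2 : t ≤ n - 1) :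
    ellFn (glueFn n k) (n + t) = n + ellFn (dualFn n k) t := by
  have hA := dual_arc hk
  apply IsLeast.csInf_eq
  constructor
  · refine ⟨by omega, ?_⟩
    -- n + ellFn A t reaches n + t
    have het := ell_spec (k := dualFn n k) h1
    obtain ⟨m, hm⟩ := het.2
    have hle : ellFn (dualFn n k) t ≤ t := ell_le_self h1
    obtain ⟨e1, _, _⟩ := glue_second_iter hk hn m het.1 (by omega)
    exact ⟨m, by rw [e1, hm]⟩
  · rintro u ⟨hu1, m, hm⟩
    -- u must be > n
    rcases Nat.lt_or_ge n u with h | h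
    · have hu2n : u ≤ n + t := by
        have := iter_le_self (arc_le_apply (glue_arc hk hn)) u m
        omega
      obtain ⟨e1, e2, e3⟩ := glue_second_iter hk hn m (s := u - n) (by omega) (by omega)
      rw [show n + (u - n) = u by omega] at e1
      rw [e1] at hm
      have : (dualFn n k)^[m] (u - n) = t := by omega
      have := ell_le (k := dualFn n k) t (by omega) ⟨m, this⟩
      omega
    · exfalso
      rcases glue_first_orbit hk hn h m with hh | hh <;> omega

/-- Forward direction: glueFn n k is a self-dual basic arc diagram on 2n nodes. -/
lemma glue_selfdual (hk : IsArcDiagram n k) (hnc : IsNonCrossing n k) (hn : 1 ≤ n) :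
    IsSelfDual (2 * n) (glueFn n k) := by
  have hA := dual_arc hk
  intro j hj1 hj2
  rcases Nat.lt_or_ge j n with hj | hj
  · -- j ≤ n - 1
    have e1 : glueFn n k j = k j := glue_lo hj1 (by omega)
    have hkj := hk.1 j hj1 (by omega)
    set t := n - j with ht
    have e2 : ellFn (glueFn n k) (2*n - j) = n + ellFn (dualFn n k) t := by
      rw [show 2*n - j = n + t by omega]
      exact ell_glue_hi hk hn (by omega) (by omega)
    have e3 : ellFn (dualFn n k) t = n + 1 - k (n - t) := ell_dual hk hnc (by omega) (by omega)
    rw [show n - t = j by omega] at e3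
    rw [e1, e2, e3]
    omega
  · rcases eq_or_lt_of_le hj with he | hlt
    · -- j = n
      rw [← he, glue_mid hn]
      rw [show 2*n - n = n by omega, ell_glue_lo hk hn (le_refl n)]
      have : ellFn k n = 1 := ell_top hk hn
      omega
    · -- j ∈ [n+1, 2n-1]
      have e1 : glueFn n k j = n + dualFn n k (j - n) := glue_hi (by omega) hj2
      have e2 : dualFn n k (j - n) = n + 1 - ellFn k (n - (j - n)) := by
        unfold dualFn; rw [if_pos ⟨by omega, by omega⟩]
      have e3 : ellFn (glueFn n k) (2*n - j) = ellFn k (2*n - j) := by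
        apply ell_glue_lo hk hn; omega
      have b1 := ell_pos (k := k) (show 1 ≤ 2*n - j by omega)
      have b2 := ell_le_self (k := k) (show 1 ≤ 2*n - j by omega)
      rw [e1, e2, e3, show n - (j - n) = 2*n - j by omega]
      omega

end SDAD

namespace SDAD

def BasicSet (n : ℕ) : Set (ℕ → ℕ) := {k | IsArcDiagram n k ∧ IsNonCrossing n k}

variable {n : ℕ}

lemma glue_image (hn : 1 ≤ n) :
    {k : ℕ → ℕ | IsArcDiagram (2*n) k ∧ IsNonCrossing (2*n) k ∧ IsSelfDual (2*n) k}
      = glueFn n '' BasicSet n := by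
  ext K
  simp only [Set.mem_setOf_eq, Set.mem_image]
  constructor
  · rintro ⟨hk, hnc, hsd⟩
    obtain ⟨n', hn', hkn', hbound⟩ := selfdual_structure (by omega) hk hnc hsd
    obtain rfl : n = n' := by omega
    -- define the restriction
    set k₀ : ℕ → ℕ := fun j => if 1 ≤ j ∧ j ≤ n - 1 then K j else j with hk₀
    have hk₀arc : IsArcDiagram n k₀ := by
      constructor
      · intro j h1 h2
        have := hk.1 j h1 (by omega)
        have := hbound j h1 h2
        simp only [hk₀, if_pos (⟨h1, h2⟩ : 1 ≤ j ∧ j ≤ n - 1)]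
        omega
      · intro j h
        simp only [hk₀, if_neg h]
    have hk₀nc : IsNonCrossing n k₀ := by
      intro j₁ j₂ h1 h2
      rintro ⟨ha, hb, hc⟩
      have hj1 : j₁ ≤ n - 1 := by omega
      have e1 : k₀ j₁ = K j₁ := by simp only [hk₀, if_pos (⟨h1, hj1⟩ : 1 ≤ j₁ ∧ j₁ ≤ n-1)]
      have e2 : k₀ j₂ = K j₂ := by simp only [hk₀, if_pos (⟨by omega, h2⟩ : 1 ≤ j₂ ∧ j₂ ≤ n-1)]
      rw [e1] at hb hc; rw [e2] at hc
      exact hnc j₁ j₂ h1 (by omega) ⟨ha, hb, hc⟩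
    refine ⟨k₀, ⟨hk₀arc, hk₀nc⟩, ?_⟩
    -- glueFn n k₀ = K
    funext j
    by_cases hc1 : 1 ≤ j ∧ j ≤ n - 1
    · rw [glue_lo hc1.1 hc1.2]
      simp only [hk₀, if_pos hc1]
    · by_cases hc2 : j = n
      · rw [hc2, glue_mid hn, ← hkn']
      · by_cases hc3 : n + 1 ≤ j ∧ j ≤ 2*n - 1
        · rw [glue_hi hc3.1 hc3.2]
          have e2 : dualFn n k₀ (j - n) = n + 1 - ellFn k₀ (n - (j - n)) := by
            unfold dualFn; rw [if_pos ⟨by omega, by omega⟩]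
          have hsdj := hsd j (by omega) hc3.2
          set v := 2*n - j with hv
          have hv1 : 1 ≤ v := by omega
          have hvn : v ≤ n - 1 := by omega
          have e3 : ellFn k₀ v = ellFn K v := by
            apply ellFn_congr (arc_le_apply hk₀arc) (arc_le_apply hk)
            intro x hx
            rcases Nat.eq_zero_or_pos x with h0 | h0
            · rw [h0, arc_zero hk₀arc, arc_zero hk]
            · simp only [hk₀, if_pos (⟨h0, by omega⟩ : 1 ≤ x ∧ x ≤ n - 1)]
          have b1 := ell_pos (k := K) hv1
          have b2 := ell_le_self (k := K) hv1
          rw [e2, show n - (j - n) = v by omega, e3]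
          omega
        · rw [glue_other (by omega)]
          rw [hk.2 j (by omega)]
  · rintro ⟨k₀, ⟨hk₀, hnc₀⟩, rfl⟩
    exact ⟨glue_arc hk₀ hn, glue_nc hk₀ hnc₀ hn, glue_selfdual hk₀ hnc₀ hn⟩

lemma glue_injOn (hn : 1 ≤ n) : Set.InjOn (glueFn n) (BasicSet n) := by
  intro a ha b hb hab
  funext j
  by_cases h : 1 ≤ j ∧ j ≤ n - 1
  · have e1 : glueFn n a j = a j := glue_lo h.1 h.2
    have e2 : glueFn n b j = b j := glue_lo h.1 h.2
    rw [← e1, ← e2, hab]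
  · rw [ha.1.2 j h, hb.1.2 j h]

end SDAD

namespace SDAD

lemma basic_finite (n : ℕ) : (BasicSet n).Finite := by
  classical
  apply Set.Finite.of_finite_image (f := fun k => (fun i : Fin n => k i.val))
  · apply Set.Finite.subset (Set.Finite.pi (t := fun _ : Fin n => Set.Iic n)
      (fun _ => Set.finite_Iic n))
    rintro f ⟨k, hk, rfl⟩
    intro i _
    simp only [Set.mem_Iic]
    rcases Nat.eq_zero_or_pos i.val with h | h
    · rw [h, arc_zero hk.1]; omega
    · have hi : i.val ≤ n - 1 := by have := i.isLt; omega
      exact (hk.1.1 i.val h hi).2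
  · intro a ha b hb hab
    funext j
    by_cases h : 1 ≤ j ∧ j ≤ n - 1
    · have hj : j < n := by omega
      have := congrFun hab ⟨j, hj⟩
      simpa using this
    · rw [ha.1.2 j h, hb.1.2 j h]

lemma ncard_prod {α β : Type*} (A : Set α) (B : Set β) :
    (A ×ˢ B).ncard = A.ncard * B.ncard := by
  rw [← Nat.card_coe_set_eq, ← Nat.card_coe_set_eq, ← Nat.card_coe_set_eq]
  rw [Nat.card_congr (Equiv.Set.prod A B), Nat.card_prod]

/- second gluing map: decomposition by `k 1 = c` -/

def glue2 (n c : ℕ) (p : (ℕ → ℕ) × (ℕ → ℕ)) : ℕ → ℕ := fun j =>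
  if j = 1 then c
  else if 2 ≤ j ∧ j ≤ c - 1 then p.1 (j - 1) + 1
  else if c ≤ j ∧ j ≤ n - 1 then p.2 (j - c + 1) + (c - 1)
  else j

lemma glue2_mem {n c : ℕ} (hc : 2 ≤ c) (hcn : c ≤ n) {p : (ℕ → ℕ) × (ℕ → ℕ)}
    (hL : p.1 ∈ BasicSet (c - 1)) (hR : p.2 ∈ BasicSet (n - c + 1)) :
    glue2 n c p ∈ BasicSet n ∧ glue2 n c p 1 = c := by
  have e1 : glue2 n c p 1 = c := by unfold glue2; rw [if_pos rfl]
  have eL : ∀ j, 2 ≤ j → j ≤ c - 1 → glue2 n c p j = p.1 (j - 1) + 1 := by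
    intro j h1 h2; unfold glue2; rw [if_neg (by omega), if_pos ⟨h1, h2⟩]
  have eR : ∀ j, c ≤ j → j ≤ n - 1 → glue2 n c p j = p.2 (j - c + 1) + (c - 1) := by
    intro j h1 h2; unfold glue2
    rw [if_neg (by omega), if_neg (by omega), if_pos ⟨h1, h2⟩]
  have eO : ∀ j, ¬(1 ≤ j ∧ j ≤ n - 1) → glue2 n c p j = j := by
    intro j h; unfold glue2
    rw [if_neg (by omega), if_neg (by omega), if_neg (by omega)]
  have hLarc : ∀ j, 1 ≤ j → j ≤ c - 2 → j < p.1 j ∧ p.1 j ≤ c - 1 := by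
    intro j h1 h2
    have := hL.1.1 j h1 (by omega)
    omega
  have hRarc : ∀ j, 1 ≤ j → j ≤ n - c → j < p.2 j ∧ p.2 j ≤ n - c + 1 := by
    intro j h1 h2
    have := hR.1.1 j h1 (by omega)
    omega
  refine ⟨⟨⟨?_, ?_⟩, ?_⟩, e1⟩
  · intro j h1 h2
    by_cases hj1 : j = 1
    · rw [hj1, e1]; omega
    · by_cases hj2 : j ≤ c - 1
      · rw [eL j (by omega) hj2]
        have := hLarc (j-1) (by omega) (by omega)
        omega
      · rw [eR j (by omega) h2]
        have := hRarc (j - c + 1) (by omega) (by omega)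
        omega
  · intro j h
    exact eO j h
  · -- non-crossing
    intro j₁ j₂ h1 h2
    rintro ⟨ha, hb, hcx⟩
    by_cases hj1 : j₁ = 1
    · rw [hj1, e1] at hb hcx
      have hj2b : 2 ≤ j₂ ∧ j₂ ≤ c - 1 := by omega
      rw [eL j₂ hj2b.1 hj2b.2] at hcx
      have := hLarc (j₂ - 1) (by omega) (by omega)
      omega
    · by_cases hj2 : j₁ ≤ c - 1
      · have e3 : glue2 n c p j₁ = p.1 (j₁ - 1) + 1 := eL j₁ (by omega) hj2
        have b1 := hLarc (j₁ - 1) (by omega) (by omega)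
        rw [e3] at hb hcx
        have hj2b : 2 ≤ j₂ ∧ j₂ ≤ c - 1 := by omega
        have e4 : glue2 n c p j₂ = p.1 (j₂ - 1) + 1 := eL j₂ hj2b.1 hj2b.2
        rw [e4] at hcx
        exact hL.2 (j₁ - 1) (j₂ - 1) (by omega) (by omega) ⟨by omega, by omega, by omega⟩
      · have hj1c : c ≤ j₁ := by omega
        have e3 : glue2 n c p j₁ = p.2 (j₁ - c + 1) + (c - 1) := eR j₁ hj1c (by omega)
        have b1 := hRarc (j₁ - c + 1) (by omega) (by omega)
        have e4 : glue2 n c p j₂ = p.2 (j₂ - c + 1) + (c - 1) := eR j₂ (by omega) h2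
        have b2 := hRarc (j₂ - c + 1) (by omega) (by omega)
        rw [e3] at hb hcx
        rw [e4] at hcx
        exact hR.2 (j₁ - c + 1) (j₂ - c + 1) (by omega) (by omega)
          ⟨by omega, by omega, by omega⟩

lemma glue2_injOn {n c : ℕ} (hc : 2 ≤ c) (hcn : c ≤ n) :
    Set.InjOn (glue2 n c) (BasicSet (c-1) ×ˢ BasicSet (n-c+1)) := by
  rintro ⟨a1, a2⟩ ⟨ha1, ha2⟩ ⟨b1, b2⟩ ⟨hb1, hb2⟩ hab
  simp only [Set.mem_setOf_eq] at ha1 ha2 hb1 hb2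
  have eL : ∀ (p : (ℕ → ℕ) × (ℕ → ℕ)) j, 2 ≤ j → j ≤ c - 1 → glue2 n c p j = p.1 (j - 1) + 1 := by
    intro p j h1 h2; unfold glue2; rw [if_neg (by omega), if_pos ⟨h1, h2⟩]
  have eR : ∀ (p : (ℕ → ℕ) × (ℕ → ℕ)) j, c ≤ j → j ≤ n - 1 →
      glue2 n c p j = p.2 (j - c + 1) + (c - 1) := by
    intro p j h1 h2; unfold glue2
    rw [if_neg (by omega), if_neg (by omega), if_pos ⟨h1, h2⟩]
  have h1 : a1 = b1 := by
    funext j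
    by_cases h : 1 ≤ j ∧ j ≤ c - 2
    · have := congrFun hab (j + 1)
      rw [eL _ (j+1) (by omega) (by omega), eL _ (j+1) (by omega) (by omega)] at this
      simp only [Nat.add_sub_cancel] at this
      omega
    · rw [ha1.1.2 j (by omega), hb1.1.2 j (by omega)]
  have h2 : a2 = b2 := by
    funext j
    by_cases h : 1 ≤ j ∧ j ≤ n - c
    · have := congrFun hab (j + c - 1)
      rw [eR _ (j+c-1) (by omega) (by omega), eR _ (j+c-1) (by omega) (by omega)] at this
      rw [show j + c - 1 - c + 1 = j by omega] at this
      dsimp only at this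
      omega
    · rw [ha2.1.2 j (by omega), hb2.1.2 j (by omega)]
  rw [Prod.mk.injEq]
  exact ⟨h1, h2⟩

lemma glue2_surj {n : ℕ} {k : ℕ → ℕ} (hn : 2 ≤ n) (hk : k ∈ BasicSet n) :
    ∃ p ∈ BasicSet (k 1 - 1) ×ˢ BasicSet (n - k 1 + 1), glue2 n (k 1) p = k := by
  obtain ⟨hka, hknc⟩ := hk
  set c := k 1 with hcdef
  have hc : 2 ≤ c ∧ c ≤ n := by
    have := hka.1 1 (le_refl 1) (by omega)
    omega
  -- bound: arcs in [2, c-1] stay ≤ c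
  have hbound : ∀ j, 2 ≤ j → j ≤ c - 1 → k j ≤ c := by
    intro j h1 h2
    have := hknc 1 j (le_refl 1) (by omega)
    by_contra hcon
    exact this ⟨by omega, by omega, by omega⟩
  set kL : ℕ → ℕ := fun j => if 1 ≤ j ∧ j ≤ c - 2 then k (j+1) - 1 else j with hkL
  set kR : ℕ → ℕ := fun j => if 1 ≤ j ∧ j ≤ n - c then k (j+c-1) - (c-1) else j with hkR
  have hkLval : ∀ j, 1 ≤ j → j ≤ c - 2 → kL j = k (j+1) - 1 := by
    intro j h1 h2; simp only [hkL, if_pos (⟨h1, h2⟩ : 1 ≤ j ∧ j ≤ c - 2)]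
  have hkRval : ∀ j, 1 ≤ j → j ≤ n - c → kR j = k (j+c-1) - (c-1) := by
    intro j h1 h2; simp only [hkR, if_pos (⟨h1, h2⟩ : 1 ≤ j ∧ j ≤ n - c)]
  have hbL : ∀ j, 1 ≤ j → j ≤ c - 2 → j + 1 < k (j+1) ∧ k (j+1) ≤ c := by
    intro j h1 h2
    have := hka.1 (j+1) (by omega) (by omega)
    have := hbound (j+1) (by omega) (by omega)
    omega
  have hbR : ∀ j, 1 ≤ j → j ≤ n - c → j + c - 1 < k (j+c-1) ∧ k (j+c-1) ≤ n := by
    intro j h1 h2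
    have := hka.1 (j+c-1) (by omega) (by omega)
    omega
  have hLmem : kL ∈ BasicSet (c - 1) := by
    constructor
    · constructor
      · intro j h1 h2
        rw [hkLval j h1 (by omega)]
        have := hbL j h1 (by omega)
        omega
      · intro j h
        simp only [hkL, if_neg (show ¬(1 ≤ j ∧ j ≤ c - 2) by omega)]
    · intro j₁ j₂ h1 h2
      rintro ⟨ha, hb, hcx⟩
      have hj2 : j₂ ≤ c - 2 := by omega
      have b1 := hbL j₁ h1 (by omega)
      have b2 := hbL j₂ (by omega) hj2
      rw [hkLval j₁ h1 (by omega)] at hb hcx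
      rw [hkLval j₂ (by omega) hj2] at hcx
      exact hknc (j₁+1) (j₂+1) (by omega) (by omega) ⟨by omega, by omega, by omega⟩
  have hRmem : kR ∈ BasicSet (n - c + 1) := by
    constructor
    · constructor
      · intro j h1 h2
        rw [hkRval j h1 (by omega)]
        have := hbR j h1 (by omega)
        omega
      · intro j h
        simp only [hkR, if_neg (show ¬(1 ≤ j ∧ j ≤ n - c) by omega)]
    · intro j₁ j₂ h1 h2
      rintro ⟨ha, hb, hcx⟩
      have hj2 : j₂ ≤ n - c := by omega
      have b1 := hbR j₁ h1 (by omega)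
      have b2 := hbR j₂ (by omega) hj2
      rw [hkRval j₁ h1 (by omega)] at hb hcx
      rw [hkRval j₂ (by omega) hj2] at hcx
      exact hknc (j₁+c-1) (j₂+c-1) (by omega) (by omega) ⟨by omega, by omega, by omega⟩
  refine ⟨(kL, kR), ⟨hLmem, hRmem⟩, ?_⟩
  funext j
  by_cases hj1 : j = 1
  · unfold glue2; rw [if_pos hj1, hj1]
  · by_cases hj2 : 2 ≤ j ∧ j ≤ c - 1
    · unfold glue2
      rw [if_neg hj1, if_pos hj2]
      simp only
      rw [hkLval (j-1) (by omega) (by omega)]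
      rw [show j - 1 + 1 = j by omega]
      have := hka.1 j (by omega) (by omega)
      omega
    · by_cases hj3 : c ≤ j ∧ j ≤ n - 1
      · unfold glue2
        rw [if_neg hj1, if_neg hj2, if_pos hj3]
        simp only
        rw [hkRval (j-c+1) (by omega) (by omega)]
        rw [show j - c + 1 + c - 1 = j by omega]
        have := hka.1 j (by omega) (by omega)
        omega
      · unfold glue2
        rw [if_neg hj1, if_neg hj2, if_neg hj3]
        rw [hka.2 j (by omega)]

lemma basic_one : BasicSet 1 = {fun j => j} := by
  ext k
  simp only [BasicSet, Set.mem_setOf_eq, Set.mem_singleton_iff]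
  constructor
  · rintro ⟨⟨h1, h2⟩, h3⟩
    funext j
    exact h2 j (by omega)
  · rintro rfl
    refine ⟨⟨fun j h1 h2 => by omega, fun j h => rfl⟩, ?_⟩
    rintro j₁ j₂ h1 h2 ⟨ha, hb, hc⟩
    simp only at hb hc
    omega

lemma card_basic : ∀ n, 1 ≤ n → (BasicSet n).ncard = catalan (n - 1) := by
  intro n
  induction n using Nat.strong_induction_on with
  | _ n ih =>
    intro hn
    rcases eq_or_lt_of_le hn with h1 | h1
    · rw [← h1, basic_one, Set.ncard_singleton]
      simp
    · classical
      have hfin := basic_finite n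
      set Scol : ℕ → Set (ℕ → ℕ) :=
        fun c => glue2 n c '' (BasicSet (c-1) ×ˢ BasicSet (n-c+1)) with hScol
      have hfC : ∀ c, (Scol c).Finite :=
        fun c => Set.Finite.image _ ((basic_finite _).prod (basic_finite _))
      have hval : ∀ c, 2 ≤ c → c ≤ n → ∀ k ∈ Scol c, k 1 = c ∧ k ∈ BasicSet n := by
        rintro c hc1 hc2 k ⟨p, hp, rfl⟩
        obtain ⟨hp1, hp2⟩ := hp
        have := glue2_mem hc1 hc2 hp1 hp2
        exact ⟨this.2, this.1⟩
      have hset : hfin.toFinset = (Finset.Icc 2 n).biUnion (fun c => (hfC c).toFinset) := by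
        ext k
        simp only [Set.Finite.mem_toFinset, Finset.mem_biUnion, Finset.mem_Icc]
        constructor
        · intro hk
          have hc : 2 ≤ k 1 ∧ k 1 ≤ n := by
            have := hk.1.1 1 (le_refl 1) (by omega)
            omega
          obtain ⟨p, hp, hpk⟩ := glue2_surj (by omega) hk
          exact ⟨k 1, hc, ⟨p, hp, hpk⟩⟩
        · rintro ⟨c, hc, hk⟩
          exact (hval c hc.1 hc.2 k hk).2
      have hcard1 : (BasicSet n).ncard = hfin.toFinset.card :=
        Set.ncard_eq_toFinset_card _ hfin
      have hdisj : ∀ c ∈ Finset.Icc 2 n, ∀ c' ∈ Finset.Icc 2 n, c ≠ c' →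
          Disjoint ((hfC c).toFinset) ((hfC c').toFinset) := by
        intro c hc c' hc' hne
        rw [Finset.mem_Icc] at hc hc'
        rw [Finset.disjoint_left]
        intro k hk hk'
        rw [Set.Finite.mem_toFinset] at hk hk'
        have e1 := (hval c hc.1 hc.2 k hk).1
        have e2 := (hval c' hc'.1 hc'.2 k hk').1
        omega
      have hcard2 : hfin.toFinset.card = ∑ c ∈ Finset.Icc 2 n, ((hfC c).toFinset).card := by
        rw [hset, Finset.card_biUnion hdisj]
      have hcard3 : ∀ c ∈ Finset.Icc 2 n,
          ((hfC c).toFinset).card = catalan (c - 2) * catalan (n - c) := by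
        intro c hc
        rw [Finset.mem_Icc] at hc
        have e1 : ((hfC c).toFinset).card = (Scol c).ncard :=
          (Set.ncard_eq_toFinset_card _ (hfC c)).symm
        rw [e1, hScol]
        rw [Set.ncard_image_of_injOn (glue2_injOn hc.1 hc.2)]
        rw [ncard_prod]
        rw [ih (c-1) (by omega) (by omega), ih (n-c+1) (by omega) (by omega)]
        rw [show c - 1 - 1 = c - 2 by omega, show n - c + 1 - 1 = n - c by omega]
      have hsum : ∑ c ∈ Finset.Icc 2 n, catalan (c - 2) * catalan (n - c)
          = catalan (n - 1) := by
        rw [show n - 1 = (n - 2) + 1 by omega, catalan_succ]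
        rw [Fin.sum_univ_eq_sum_range (fun i => catalan i * catalan (n - 2 - i)) (n-2).succ]
        apply Finset.sum_nbij' (fun a => a - 2) (fun a => a + 2)
        · intro a ha; rw [Finset.mem_Icc] at ha; rw [Finset.mem_range]; omega
        · intro a ha; rw [Finset.mem_range] at ha; rw [Finset.mem_Icc]; omega
        · intro a ha; rw [Finset.mem_Icc] at ha; omega
        · intro a ha; rw [Finset.mem_range] at ha; omega
        · intro a ha; rw [Finset.mem_Icc] at ha
          have h9 : n - 2 - (a - 2) = n - a := by omega
          rw [h9]
      rw [hcard1, hcard2, Finset.sum_congr rfl hcard3, hsum]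

end SDAD


/-- For even `N`, the number of self-dual basic (non-crossing) arc diagrams on
`N` nodes is the Catalan number `C_{N/2 - 1}`; for odd `N ≥ 2` there are none. -/
theorem card_self_dual_basic_arc_diagrams (N : ℕ) (hN : 2 ≤ N) :
    (Even N →
      {k : ℕ → ℕ | IsArcDiagram N k ∧ IsNonCrossing N k ∧ IsSelfDual N k}.ncard
        = catalan (N / 2 - 1)) ∧
    (Odd N →
      {k : ℕ → ℕ | IsArcDiagram N k ∧ IsNonCrossing N k ∧ IsSelfDual N k}.ncard
        = 0) := by
  constructor
  · intro hEven
    obtain ⟨n, hn⟩ := hEven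
    have hn2 : N = 2 * n := by omega
    have hn1 : 1 ≤ n := by omega
    subst hn2
    rw [SDAD.glue_image hn1, Set.ncard_image_of_injOn (SDAD.glue_injOn hn1)]
    rw [SDAD.card_basic n hn1]
    congr 1
    omega
  · intro hOdd
    have : {k : ℕ → ℕ | IsArcDiagram N k ∧ IsNonCrossing N k ∧ IsSelfDual N k} = ∅ := by
      rw [Set.eq_empty_iff_forall_notMem]
      rintro k ⟨hk, hnc, hsd⟩
      obtain ⟨n, hn, _, _⟩ := SDAD.selfdual_structure hN hk hnc hsd
      obtain ⟨m, hm⟩ := hOdd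
      omega
    rw [this, Set.ncard_empty]
end
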